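/- arXiv:1402.2043 — 9 statements merged into one kernel-verified Lean document; each statement's English description precedes it below -/
import Mathlib

section
/- Let γ₁ > 0 and γ₂ > 0 be real numbers, and define the sequence (u_n)_{n≥1} of positive reals by u₁ = γ₂ and u_{n+1} = u_n + 2γ₁·√((n+1)·u_n) + γ₂·(n+1)² for all n ≥ 1. Then for every n ≥ 1 one has u_n ≤ max{2γ₁², γ₂}·n³. -/
/-- For positive reals `γ₁, γ₂`, the sequence defined by `u 1 = γ₂` and
`u (n+1) = u n + 2γ₁√((n+1)·u n) + γ₂(n+1)²` satisfies `u n ≤ max (2γ₁²) γ₂ · n³`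
for all `n ≥ 1`. -/
theorem stmt0 (γ₁ γ₂ : ℝ) (hγ₁ : 0 < γ₁) (hγ₂ : 0 < γ₂)
    (u : ℕ → ℝ) (hpos : ∀ n : ℕ, 1 ≤ n → 0 < u n) (hu1 : u 1 = γ₂)
    (hrec : ∀ n : ℕ, 1 ≤ n →
      u (n + 1) = u n + 2 * γ₁ * Real.sqrt ((n + 1 : ℝ) * u n) + γ₂ * (n + 1 : ℝ) ^ 2) :
    ∀ n : ℕ, 1 ≤ n → u n ≤ max (2 * γ₁ ^ 2) γ₂ * (n : ℝ) ^ 3 := by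
  set C := max (2 * γ₁ ^ 2) γ₂ with hC
  have hC1 : 2 * γ₁ ^ 2 ≤ C := le_max_left _ _
  have hC2 : γ₂ ≤ C := le_max_right _ _
  have hCpos : 0 < C := lt_of_lt_of_le hγ₂ hC2
  intro n hn
  induction n with
  | zero => omega
  | succ m ih =>
    rcases Nat.lt_or_ge m 1 with h1 | hm
    · interval_cases m
      rw [hu1]
      norm_num
      nlinarith [hC2]
    · have IH := ih hm
      have hrecm := hrec m hm
      have hum := hpos m hm
      have hmR : (1:ℝ) ≤ (m:ℝ) := by exact_mod_cast hm
      set s := Real.sqrt ((m + 1 : ℝ) * u m) with hs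
      have hs0 : 0 ≤ s := Real.sqrt_nonneg _
      have hs2 : s ^ 2 = ((m:ℝ) + 1) * u m := Real.sq_sqrt (by positivity)
      have hsq : (2 * γ₁ * s) ^ 2 ≤ (C * m * (2 * m + 1)) ^ 2 := by
        have h1 : (2 * γ₁ * s) ^ 2 = 4 * γ₁ ^ 2 * (((m:ℝ) + 1) * u m) := by
          rw [mul_pow, mul_pow, hs2]; ring
        have h2 : 4 * γ₁ ^ 2 * (((m:ℝ) + 1) * u m) ≤ 2 * C * (((m:ℝ) + 1) * u m) := by
          have : 0 ≤ ((m:ℝ) + 1) * u m := by positivity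
          nlinarith
        have h3 : 2 * C * (((m:ℝ) + 1) * u m) ≤ 2 * C * (((m:ℝ) + 1) * (C * (m:ℝ) ^ 3)) := by
          have : 0 ≤ 2 * C * ((m:ℝ) + 1) := by positivity
          nlinarith
        have h4 : 2 * C * (((m:ℝ) + 1) * (C * (m:ℝ) ^ 3)) ≤ (C * m * (2 * m + 1)) ^ 2 := by
          nlinarith [sq_nonneg ((m:ℝ) - 1), hCpos.le, sq_nonneg (C * (m:ℝ))]
        linarith
      have key : 2 * γ₁ * s ≤ C * m * (2 * m + 1) := by
        have h0 : 0 ≤ 2 * γ₁ * s := by positivity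
        have h0' : (0:ℝ) ≤ C * m * (2 * m + 1) := by positivity
        nlinarith
      have goal : u (m + 1) ≤ C * ((m:ℝ) + 1) ^ 3 := by
        rw [hrecm]
        have : γ₂ * ((m:ℝ) + 1) ^ 2 ≤ C * ((m:ℝ) + 1) ^ 2 := by nlinarith
        nlinarith
      exact_mod_cast goal
end

section
/- Let A be a finite set with |A| ≥ 2, let d ≥ 1, and let K_max > 0. For t ≥ 1 let m_t : A → ℝ^d satisfy ‖m_{t,a}‖₂ ≤ K_max for all a ∈ A and ‖m_{t,a} − m_{s,b}‖₂ ≤ K_max for all s, t ≥ 1 and a, b ∈ A. For n ≥ 1 call block n the set of rounds t with n(n−1)/2 < t ≤ n(n+1)/2, and set m̄⁽ⁿ⁾ := (1/n)·Σ_{t ∈ block n} m_t. Let (x_t)_{t≥1} and (w_n)_{n≥1} be elements of Δ(A), and for n ≥ 1 define δ_n := Σ_{t ≤ n(n−1)/2} x_t ⊙ m_t − Σ_{k=1}^{n−1} k·(w_k ⊙ m̄⁽ᵏ⁾) ∈ ℝ^d. Assume the per-block regret guarantee: for every n ≥ 1 and every u ∈ Δ(A), Σ_{t ∈ block n} ⟨δ_n,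 x_t ⊙ m_t⟩ ≤ 4·B_n·√(n·ln|A|) + Σ_{t ∈ block n} ⟨δ_n, u ⊙ m_t⟩, where B_n := max over t ∈ block n and a ∈ A of |⟨δ_n, m_{t,a}⟩|. Then for every N ≥ 1, ‖δ_{N+1}‖₂ ≤ K_max·√(32·ln|A|·N³). -/
open Finset

variable {A : Type*} [Fintype A]

/-- `x ⊙ m := ∑ a, x a • m a`. -/
noncomputable def dotProd {d : ℕ} (x : A → ℝ) (mm : A → EuclideanSpace ℝ (Fin d)) :
    EuclideanSpace ℝ (Fin d) :=
  ∑ a, x a • mm a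

/-- Block `n`: the rounds `t` with `n(n-1)/2 < t ≤ n(n+1)/2`. -/
def blockSet (n : ℕ) : Finset ℕ := Finset.Ioc (n * (n - 1) / 2) (n * (n + 1) / 2)

/-- `m̄⁽ⁿ⁾`, the average of the vectors of vector payoffs obtained in block `n`. -/
noncomputable def blockAvg {d : ℕ} (m : ℕ → A → EuclideanSpace ℝ (Fin d)) (n : ℕ) :
    A → EuclideanSpace ℝ (Fin d) :=
  fun a => (n : ℝ)⁻¹ • ∑ t ∈ blockSet n, m t a

/-- The discrepancy `δ_n` at the beginning of block `n`. -/
noncomputable def delta {d : ℕ} (m : ℕ → A → EuclideanSpace ℝ (Fin d))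
    (x w : ℕ → A → ℝ) (n : ℕ) : EuclideanSpace ℝ (Fin d) :=
  ∑ t ∈ Finset.Icc 1 (n * (n - 1) / 2), dotProd (x t) (m t)
    - ∑ k ∈ Finset.Icc 1 (n - 1), (k : ℝ) • dotProd (w k) (blockAvg m k)

/-- `B_n`: the maximum of `|⟨δ_n, m_{t,a}⟩|` over `t` in block `n` and `a ∈ A`. -/
noncomputable def Bmax {d : ℕ} (m : ℕ → A → EuclideanSpace ℝ (Fin d))
    (x w : ℕ → A → ℝ) (n : ℕ) : ℝ :=
  sSup {r : ℝ | ∃ t ∈ blockSet n, ∃ a : A, r = |(inner ℝ (delta m x w n) (m t a) : ℝ)|}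

section Aux

lemma half_step (n : ℕ) (hn : 1 ≤ n) : n * (n + 1) / 2 = n * (n - 1) / 2 + n := by
  obtain ⟨k, rfl⟩ : ∃ k, n = k + 1 := ⟨n - 1, by omega⟩
  obtain ⟨c, hc⟩ := (Nat.even_mul_succ_self k)
  have h1 : (k + 1) * (k + 1 + 1) = k * (k + 1) + 2 * (k + 1) := by ring
  have h2 : (k + 1) * (k + 1 - 1) = k * (k + 1) := by simp [Nat.mul_comm]
  omega

lemma card_blockSet (n : ℕ) (hn : 1 ≤ n) : (blockSet n).card = n := by
  rw [blockSet, Nat.card_Ioc, half_step n hn]; omega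

lemma blockSet_mem_one_le {t n : ℕ} (ht : t ∈ blockSet n) : 1 ≤ t := by
  rw [blockSet, Finset.mem_Ioc] at ht; omega

variable {A : Type*} [Fintype A] {d : ℕ}

lemma smul_dotProd_blockAvg (mm : ℕ → A → EuclideanSpace ℝ (Fin d)) (wv : A → ℝ)
    (n : ℕ) (hn : 1 ≤ n) :
    (n : ℝ) • dotProd wv (blockAvg mm n) = ∑ t ∈ blockSet n, dotProd wv (mm t) := by
  have hne : (n : ℝ) ≠ 0 := by positivity
  unfold dotProd blockAvg
  rw [Finset.sum_comm, Finset.smul_sum]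
  refine Finset.sum_congr rfl fun a _ => ?_
  rw [smul_comm ((n : ℝ)) (wv a), smul_inv_smul₀ hne, Finset.smul_sum]

lemma delta_succ (m : ℕ → A → EuclideanSpace ℝ (Fin d)) (x w : ℕ → A → ℝ)
    (n : ℕ) (hn : 1 ≤ n) :
    delta m x w (n + 1) = delta m x w n
      + ∑ t ∈ blockSet n, (dotProd (x t) (m t) - dotProd (w n) (m t)) := by
  obtain ⟨k, rfl⟩ : ∃ k, n = k + 1 := ⟨n - 1, by omega⟩
  unfold delta
  have e1 : (k + 1 + 1) * (k + 1 + 1 - 1) / 2 = (k+1) * (k + 1 - 1) / 2 + (k+1) := by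
    have := half_step (k+1) (by omega)
    have h2 : (k + 1 + 1) * (k + 1 + 1 - 1) = (k+1) * (k + 1 + 1) := by
      simp [Nat.mul_comm]
    rw [h2]
    omega
  have hIcc : Finset.Icc 1 ((k + 1 + 1) * (k + 1 + 1 - 1) / 2)
      = Finset.Icc 1 ((k+1) * (k + 1 - 1) / 2) ∪ blockSet (k+1) := by
    rw [e1, blockSet]
    ext t
    simp only [Finset.mem_Icc, Finset.mem_union, Finset.mem_Ioc]
    constructor
    · intro ht
      rcases le_or_gt t ((k+1) * (k + 1 - 1) / 2) with h | h
      · exact Or.inl ⟨ht.1, h⟩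
      · right
        refine ⟨h, ?_⟩
        rw [half_step (k+1) (by omega)]
        omega
    · intro ht
      rcases ht with ⟨h1, h2⟩ | ⟨h1, h2⟩
      · omega
      · rw [half_step (k+1) (by omega)] at h2
        omega
  have hdisj : Disjoint (Finset.Icc 1 ((k+1) * (k + 1 - 1) / 2)) (blockSet (k+1)) := by
    rw [Finset.disjoint_left]
    intro t ht ht'
    rw [Finset.mem_Icc] at ht
    rw [blockSet, Finset.mem_Ioc] at ht'
    omega
  rw [hIcc, Finset.sum_union hdisj]
  have e2 : (k + 1 + 1 - 1) = (k + 1 - 1) + 1 := by omega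
  rw [e2, Finset.sum_Icc_succ_top (by omega)]
  have e3 : (k + 1 - 1 + 1) = k + 1 := by omega
  rw [e3, smul_dotProd_blockAvg m (w (k+1)) (k+1) (by omega), Finset.sum_sub_distrib]
  abel

end Aux

section Aux2

variable {A : Type*} [Fintype A] {d : ℕ}

lemma dotProd_sub_norm_le {x y : A → ℝ} (hx : x ∈ stdSimplex ℝ A) (hy : y ∈ stdSimplex ℝ A)
    {mm : A → EuclideanSpace ℝ (Fin d)} {K : ℝ}
    (hK : ∀ a b : A, ‖mm a - mm b‖ ≤ K) :
    ‖dotProd x mm - dotProd y mm‖ ≤ K := by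
  have hx1 : ∑ a, x a = 1 := hx.2
  have hy1 : ∑ b, y b = 1 := hy.2
  have key : dotProd x mm - dotProd y mm = ∑ a, ∑ b, (x a * y b) • (mm a - mm b) := by
    unfold dotProd
    simp only [smul_sub, Finset.sum_sub_distrib]
    congr 1
    · refine Finset.sum_congr rfl fun a _ => ?_
      rw [← Finset.sum_smul, ← Finset.mul_sum, hy1, mul_one]
    · rw [Finset.sum_comm]
      refine Finset.sum_congr rfl fun b _ => ?_
      rw [← Finset.sum_smul, ← Finset.sum_mul, hx1, one_mul]
  rw [key]
  calc ‖∑ a, ∑ b, (x a * y b) • (mm a - mm b)‖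
      ≤ ∑ a, ‖∑ b, (x a * y b) • (mm a - mm b)‖ := norm_sum_le _ _
    _ ≤ ∑ a, ∑ b, ‖(x a * y b) • (mm a - mm b)‖ :=
        Finset.sum_le_sum fun a _ => norm_sum_le _ _
    _ ≤ ∑ a, ∑ b, (x a * y b) * K := by
        refine Finset.sum_le_sum fun a _ => Finset.sum_le_sum fun b _ => ?_
        rw [norm_smul, Real.norm_eq_abs, abs_of_nonneg (mul_nonneg (hx.1 a) (hy.1 b))]
        exact mul_le_mul_of_nonneg_left (hK a b) (mul_nonneg (hx.1 a) (hy.1 b))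
    _ = K := by
        simp only [← Finset.sum_mul, ← Finset.mul_sum, hy1, mul_one]
        rw [hx1, one_mul]

lemma numeric_step (k : ℕ) (hk : 1 ≤ k) (K L r s : ℝ) (hK : 0 < K) (hL : (0.69 : ℝ) ≤ L)
    (hr : 0 ≤ r) (hs : 0 ≤ s) (hs2 : s ^ 2 = (k : ℝ) * L)
    (hr2 : r ^ 2 ≤ 32 * K ^ 2 * L * ((k : ℝ) - 1) ^ 3) :
    r ^ 2 + 8 * K * r * s + (k : ℝ) ^ 2 * K ^ 2 ≤ 32 * K ^ 2 * L * (k : ℝ) ^ 3 := by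
  rcases eq_or_lt_of_le hk with h1 | h2
  · -- k = 1
    have hk1 : (k : ℝ) = 1 := by rw [← h1]; norm_num
    rw [hk1] at hr2 ⊢
    have hr0 : r = 0 := by nlinarith
    rw [hr0]
    nlinarith [mul_pos (mul_pos hK hK)
      (lt_of_lt_of_le (by norm_num : (0:ℝ) < 0.69) hL)]
  · -- k ≥ 2
    have hk2 : (2 : ℝ) ≤ (k : ℝ) := by exact_mod_cast h2
    set n : ℝ := (k : ℝ) with hn
    have hn1 : (1 : ℝ) ≤ n := by linarith
    have hL0 : (0 : ℝ) < L := by linarith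
    have hcross : 8 * K * r * s ≤ 46 * K ^ 2 * L * n ^ 2 := by
      have ha : (0:ℝ) ≤ 8 * K * r * s := by positivity
      have hb : (0:ℝ) ≤ 46 * K ^ 2 * L * n ^ 2 := by positivity
      have h3 : (n - 1) ^ 3 ≤ n ^ 3 := by nlinarith
      have h4 : n * (n - 1) ^ 3 ≤ n ^ 4 := by
        nlinarith [mul_le_mul_of_nonneg_left h3 (show (0:ℝ) ≤ n by linarith)]
      have hrs : (r * s) ^ 2 ≤ 32 * K ^ 2 * L ^ 2 * n ^ 4 := by
        have h5 : r ^ 2 * s ^ 2 ≤ (32 * K ^ 2 * L * (n - 1) ^ 3) * (n * L) :=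
          mul_le_mul hr2 (le_of_eq hs2) (sq_nonneg s)
            (mul_nonneg (by positivity) (pow_nonneg (by linarith) 3))
        have h6 : (32 * K ^ 2 * L * (n - 1) ^ 3) * (n * L)
            = 32 * K ^ 2 * L ^ 2 * (n * (n - 1) ^ 3) := by ring
        have h7 := mul_le_mul_of_nonneg_left h4 (show (0:ℝ) ≤ 32 * K ^ 2 * L ^ 2 by positivity)
        calc (r * s) ^ 2 = r ^ 2 * s ^ 2 := by ring
          _ ≤ 32 * K ^ 2 * L ^ 2 * (n * (n - 1) ^ 3) := by rw [← h6]; exact h5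
          _ ≤ 32 * K ^ 2 * L ^ 2 * n ^ 4 := h7
      have hsq : (8 * K * r * s) ^ 2 ≤ (46 * K ^ 2 * L * n ^ 2) ^ 2 := by
        have h8 := mul_le_mul_of_nonneg_left hrs (show (0:ℝ) ≤ 64 * K ^ 2 by positivity)
        nlinarith [mul_nonneg (mul_nonneg (sq_nonneg K) (sq_nonneg K))
          (mul_nonneg (sq_nonneg L) (sq_nonneg (n ^ 2)))]
      exact (pow_le_pow_iff_left₀ ha hb two_ne_zero).mp hsq
    have hq : (0:ℝ) ≤ 50 * n ^ 2 - 96 * n + 32 := by nlinarith [sq_nonneg (n - 2)]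
    have h5 : (0:ℝ) ≤ (L - 0.69) * (50 * n ^ 2 - 96 * n + 32) :=
      mul_nonneg (by linarith) hq
    have h6 : n ^ 2 ≤ 0.69 * (50 * n ^ 2 - 96 * n + 32) := by nlinarith [sq_nonneg (n - 2)]
    have h7 : n ^ 2 ≤ L * (50 * n ^ 2 - 96 * n + 32) := by nlinarith
    have h8 := mul_le_mul_of_nonneg_left h7 (sq_nonneg K)
    have h9 : K ^ 2 * n ^ 2 ≤ K ^ 2 * (L * (50 * n ^ 2 - 96 * n + 32)) := h8
    linarith [hr2, hcross, h9]

end Aux2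

/-- the performance bound for the block strategy (Theorem 4.1),
stated conditionally on the per-block regret guarantee. -/
theorem stmt2 {A : Type*} [Fintype A] (hA : 2 ≤ Fintype.card A)
    {d : ℕ} (hd : 1 ≤ d) (Kmax : ℝ) (hKmax : 0 < Kmax)
    (m : ℕ → A → EuclideanSpace ℝ (Fin d))
    (x w : ℕ → A → ℝ)
    (hx : ∀ t : ℕ, x t ∈ stdSimplex ℝ A) (hw : ∀ n : ℕ, w n ∈ stdSimplex ℝ A)
    (hbound : ∀ t : ℕ, 1 ≤ t → ∀ a : A, ‖m t a‖ ≤ Kmax)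
    (hdiff : ∀ s t : ℕ, 1 ≤ s → 1 ≤ t → ∀ a b : A, ‖m t a - m s b‖ ≤ Kmax)
    (hregret : ∀ n : ℕ, 1 ≤ n → ∀ u ∈ stdSimplex ℝ A,
      ∑ t ∈ blockSet n, (inner ℝ (delta m x w n) (dotProd (x t) (m t)) : ℝ)
        ≤ 4 * Bmax m x w n * Real.sqrt ((n : ℝ) * Real.log (Fintype.card A))
          + ∑ t ∈ blockSet n, (inner ℝ (delta m x w n) (dotProd u (m t)) : ℝ)) :
    ∀ N : ℕ, 1 ≤ N →
      ‖delta m x w (N + 1)‖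
        ≤ Kmax * Real.sqrt (32 * Real.log (Fintype.card A) * (N : ℝ) ^ 3) := by
  classical
  set L := Real.log (Fintype.card A) with hLdef
  have hL2 : Real.log 2 ≤ L := by
    apply Real.log_le_log (by norm_num)
    exact_mod_cast hA
  have hL69 : (0.69 : ℝ) ≤ L := by
    have := Real.log_two_gt_d9
    linarith
  have hL0 : (0:ℝ) < L := by linarith
  have hBle : ∀ n : ℕ, 1 ≤ n → Bmax m x w n ≤ ‖delta m x w n‖ * Kmax := by
    intro n hn
    apply Real.sSup_le
    · rintro r ⟨t, ht, a, rfl⟩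
      calc |(inner ℝ (delta m x w n) (m t a) : ℝ)| ≤ ‖delta m x w n‖ * ‖m t a‖ :=
            abs_real_inner_le_norm _ _
        _ ≤ ‖delta m x w n‖ * Kmax :=
            mul_le_mul_of_nonneg_left (hbound t (blockSet_mem_one_le ht) a) (norm_nonneg _)
    · exact mul_nonneg (norm_nonneg _) hKmax.le
  have key : ∀ n : ℕ, 1 ≤ n →
      ‖delta m x w n‖ ^ 2 ≤ 32 * Kmax ^ 2 * L * ((n : ℝ) - 1) ^ 3 := by
    intro n
    induction n with
    | zero => intro h; omega
    | succ k ih =>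
      intro _
      rcases Nat.eq_zero_or_pos k with hk0 | hk
      · subst hk0
        have hz : delta m x w 1 = 0 := by
          simp [delta]
        rw [hz]
        norm_num
      · have IH := ih hk
        set δ := delta m x w k with hδ
        set D := ∑ t ∈ blockSet k, (dotProd (x t) (m t) - dotProd (w k) (m t)) with hD
        have hrec : delta m x w (k + 1) = δ + D := delta_succ m x w k hk
        have hDnorm : ‖D‖ ≤ (k : ℝ) * Kmax := by
          calc ‖D‖ ≤ ∑ t ∈ blockSet k, ‖dotProd (x t) (m t) - dotProd (w k) (m t)‖ :=
              norm_sum_le _ _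
            _ ≤ ∑ t ∈ blockSet k, Kmax := by
                refine Finset.sum_le_sum fun t ht => ?_
                exact dotProd_sub_norm_le (hx t) (hw k)
                  (fun a b => hdiff t t (blockSet_mem_one_le ht) (blockSet_mem_one_le ht) a b)
            _ = (k : ℝ) * Kmax := by
                rw [Finset.sum_const, card_blockSet k hk, nsmul_eq_mul]
        have hinner : (inner ℝ δ D : ℝ) ≤ 4 * (‖δ‖ * Kmax) * Real.sqrt ((k : ℝ) * L) := by
          have h1 := hregret k hk (w k) (hw k)
          have h2 : (inner ℝ δ D : ℝ)
              = ∑ t ∈ blockSet k, (inner ℝ δ (dotProd (x t) (m t)) : ℝ)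
                - ∑ t ∈ blockSet k, (inner ℝ δ (dotProd (w k) (m t)) : ℝ) := by
            rw [hD, inner_sum]
            simp only [inner_sub_right]
            rw [Finset.sum_sub_distrib]
          have h3 : 4 * Bmax m x w k * Real.sqrt ((k : ℝ) * L)
              ≤ 4 * (‖δ‖ * Kmax) * Real.sqrt ((k : ℝ) * L) := by
            apply mul_le_mul_of_nonneg_right _ (Real.sqrt_nonneg _)
            have := hBle k hk
            linarith
          rw [h2]
          linarith [h1]
        have expand : ‖delta m x w (k + 1)‖ ^ 2
            = ‖δ‖ ^ 2 + 2 * (inner ℝ δ D : ℝ) + ‖D‖ ^ 2 := by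
          rw [hrec]; exact norm_add_sq_real δ D
        have hs2 : (Real.sqrt ((k : ℝ) * L)) ^ 2 = (k : ℝ) * L :=
          Real.sq_sqrt (by positivity)
        have hD2 : ‖D‖ ^ 2 ≤ (k : ℝ) ^ 2 * Kmax ^ 2 := by
          nlinarith [norm_nonneg D]
        have num := numeric_step k hk Kmax L ‖δ‖ (Real.sqrt ((k : ℝ) * L)) hKmax hL69
          (norm_nonneg δ) (Real.sqrt_nonneg _) hs2 IH
        have hcast : ((k + 1 : ℕ) : ℝ) - 1 = (k : ℝ) := by push_cast; ring
        rw [expand, hcast]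
        linarith [hinner, hD2, num]
  intro N hN
  have h := key (N + 1) (by omega)
  have hcast : ((N + 1 : ℕ) : ℝ) - 1 = (N : ℝ) := by push_cast; ring
  rw [hcast] at h
  have h1 : ‖delta m x w (N + 1)‖ = Real.sqrt (‖delta m x w (N + 1)‖ ^ 2) :=
    (Real.sqrt_sq (norm_nonneg _)).symm
  rw [h1]
  have h2 : Real.sqrt (‖delta m x w (N + 1)‖ ^ 2)
      ≤ Real.sqrt (Kmax ^ 2 * (32 * L * (N : ℝ) ^ 3)) := by
    apply Real.sqrt_le_sqrt
    nlinarith [h]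
  rw [Real.sqrt_mul (sq_nonneg Kmax), Real.sqrt_sq hKmax.le] at h2
  exact h2
end

section
/- Let C ⊆ ℝ^d be nonempty and closed, let K ⊆ ℝ^k be nonempty and compact, and let φ : K → [0,∞) be continuous. Then for all sequences (m_T)_{T≥1} in K and (r_T)_{T≥1} in ℝ^d, the following are equivalent: (a) dist(r_T, C_{φ(m_T)}) → 0 as T → ∞; (b) dist((m_T, r_T), G_φ) → 0 as T → ∞, where the distance on K × ℝ^d is the product metric dist((m,r),(m',r')) = max{‖m−m'‖₂, ‖r−r'‖₂}. -/
/-- Distance to the `α`-expansion of a nonempty set `C` in a real normed space is at most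
`max (infDist x C - α) 0`. -/
lemma infDist_expansion_le {E : Type*} [NormedAddCommGroup E] [NormedSpace ℝ E]
    (C : Set E) (hC : C.Nonempty) (α : ℝ) (hα : 0 ≤ α) (x : E) :
    Metric.infDist x {r | Metric.infDist r C ≤ α} ≤ max (Metric.infDist x C - α) 0 := by
  by_cases h : Metric.infDist x C ≤ α
  · have hx : x ∈ {r | Metric.infDist r C ≤ α} := h
    rw [Metric.infDist_zero_of_mem hx]
    exact le_max_right _ _
  · push_neg at h
    rw [max_eq_left (by linarith)]
    refine le_of_forall_pos_le_add ?_
    intro ε hε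
    obtain ⟨c, hc, hdc⟩ := (Metric.infDist_lt_iff hC).mp
      (show Metric.infDist x C < Metric.infDist x C + ε by linarith)
    have hle : α < dist x c := lt_of_lt_of_le h (Metric.infDist_le_dist_of_mem hc)
    have hdpos : 0 < dist x c := lt_of_le_of_lt hα hle
    set t := α / dist x c with ht
    have ht0 : 0 ≤ t := div_nonneg hα hdpos.le
    have ht1 : t ≤ 1 := by rw [ht, div_le_one hdpos]; exact hle.le
    set y := c + t • (x - c) with hy
    have hyc : dist y c = α := by
      rw [hy, dist_eq_norm]
      simp only [add_sub_cancel_left, norm_smul, abs_of_nonneg ht0, Real.norm_eq_abs]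
      rw [← dist_eq_norm, ht]
      field_simp
    have hyS : y ∈ {r | Metric.infDist r C ≤ α} := by
      have := Metric.infDist_le_dist_of_mem (x := y) hc
      simpa [hyc] using this
    have hxy : dist x y = dist x c - α := by
      have hxysub : x - y = (1 - t) • (x - c) := by
        rw [hy]; module
      rw [dist_eq_norm, hxysub, norm_smul, Real.norm_eq_abs,
        abs_of_nonneg (by linarith), ← dist_eq_norm, ht]
      field_simp
    calc Metric.infDist x {r | Metric.infDist r C ≤ α} ≤ dist x y :=
          Metric.infDist_le_dist_of_mem hyS
      _ = dist x c - α := hxy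
      _ ≤ Metric.infDist x C - α + ε := by linarith

/-- for a continuous nonnegative target function `φ` on a compact set `K`,
convergence of `dist(r_T, C_{φ(m_T)})` to `0` is equivalent to convergence of
`(m_T, r_T)` to the graph set `G_φ` (product max-metric). -/
theorem stmt4 {d k : ℕ}
    (C : Set (EuclideanSpace ℝ (Fin d))) (hCne : C.Nonempty) (hCcl : IsClosed C)
    (K : Set (EuclideanSpace ℝ (Fin k))) (hKne : K.Nonempty) (hKcomp : IsCompact K)
    (φ : EuclideanSpace ℝ (Fin k) → ℝ) (hφ0 : ∀ m ∈ K, 0 ≤ φ m)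
    (hφcont : ContinuousOn φ K)
    (mseq : ℕ → EuclideanSpace ℝ (Fin k)) (hmseq : ∀ T, mseq T ∈ K)
    (rseq : ℕ → EuclideanSpace ℝ (Fin d)) :
    Filter.Tendsto
        (fun T => Metric.infDist (rseq T) {r | Metric.infDist r C ≤ φ (mseq T)})
        Filter.atTop (nhds 0)
      ↔ Filter.Tendsto
        (fun T => Metric.infDist (mseq T, rseq T)
          {p : EuclideanSpace ℝ (Fin k) × EuclideanSpace ℝ (Fin d) |
            p.1 ∈ K ∧ Metric.infDist p.2 C ≤ φ p.1})
        Filter.atTop (nhds 0) := by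
  obtain ⟨c0, hc0⟩ := hCne
  obtain ⟨m0, hm0⟩ := hKne
  set G : Set (EuclideanSpace ℝ (Fin k) × EuclideanSpace ℝ (Fin d)) :=
    {p | p.1 ∈ K ∧ Metric.infDist p.2 C ≤ φ p.1} with hG
  have hGne : G.Nonempty :=
    ⟨(m0, c0), hm0, by rw [Metric.infDist_zero_of_mem hc0]; exact hφ0 m0 hm0⟩
  have hSne : ∀ T, ({r | Metric.infDist r C ≤ φ (mseq T)} :
      Set (EuclideanSpace ℝ (Fin d))).Nonempty := fun T =>
    ⟨c0, by rw [Set.mem_setOf_eq, Metric.infDist_zero_of_mem hc0]; exact hφ0 _ (hmseq T)⟩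
  constructor
  · -- easy direction: dist to graph ≤ dist to slice
    intro h
    have hle : ∀ T, Metric.infDist (mseq T, rseq T) G ≤
        Metric.infDist (rseq T) {r | Metric.infDist r C ≤ φ (mseq T)} := by
      intro T
      refine le_of_forall_pos_le_add ?_
      intro η hη
      obtain ⟨y, hy, hdy⟩ := (Metric.infDist_lt_iff (hSne T)).mp
        (show Metric.infDist (rseq T) {r | Metric.infDist r C ≤ φ (mseq T)} <
          Metric.infDist (rseq T) {r | Metric.infDist r C ≤ φ (mseq T)} + η by linarith)
      have hmem : ((mseq T, y) : _ × _) ∈ G := ⟨hmseq T, hy⟩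
      calc Metric.infDist (mseq T, rseq T) G ≤ dist (mseq T, rseq T) (mseq T, y) :=
            Metric.infDist_le_dist_of_mem hmem
        _ = dist (rseq T) y := by simp [Prod.dist_eq, dist_nonneg]
        _ ≤ _ := hdy.le
    exact squeeze_zero (fun T => Metric.infDist_nonneg) hle h
  · -- hard direction
    intro h
    have hUC : UniformContinuousOn φ K :=
      hKcomp.uniformContinuousOn_of_continuous hφcont
    rw [Metric.tendsto_atTop] at h ⊢
    intro ε hε
    obtain ⟨δ0, hδ0, hδ⟩ := (Metric.uniformContinuousOn_iff.mp hUC) (ε / 3) (by linarith)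
    set δ' : ℝ := min δ0 (ε / 3) with hδ'
    have hδ'pos : 0 < δ' := lt_min hδ0 (by linarith)
    obtain ⟨N, hN⟩ := h δ' hδ'pos
    refine ⟨N, fun T hT => ?_⟩
    have hGlt : Metric.infDist (mseq T, rseq T) G < δ' := by
      have := hN T hT
      rwa [Real.dist_eq, sub_zero, abs_of_nonneg Metric.infDist_nonneg] at this
    obtain ⟨p, hpG, hpd⟩ := (Metric.infDist_lt_iff hGne).mp hGlt
    obtain ⟨m', r'⟩ := p
    obtain ⟨hm'K, hr'⟩ := hpG
    rw [Prod.dist_eq] at hpd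
    have hdm : dist (mseq T) m' < δ' := lt_of_le_of_lt (le_max_left _ _) hpd
    have hdr : dist (rseq T) r' < δ' := lt_of_le_of_lt (le_max_right _ _) hpd
    have hφclose : dist (φ (mseq T)) (φ m') < ε / 3 :=
      hδ (mseq T) (hmseq T) m' hm'K (lt_of_lt_of_le hdm (min_le_left _ _))
    have hφle : φ m' ≤ φ (mseq T) + ε / 3 := by
      have := abs_sub_lt_iff.mp (by rwa [Real.dist_eq] at hφclose)
      linarith [this.2]
    -- r' is within ε/3 of the slice at level φ (mseq T)
    have hkey : Metric.infDist r' {r | Metric.infDist r C ≤ φ (mseq T)} ≤ ε / 3 := by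
      have := infDist_expansion_le C ⟨c0, hc0⟩ (φ (mseq T)) (hφ0 _ (hmseq T)) r'
      have hmax : max (Metric.infDist r' C - φ (mseq T)) 0 ≤ ε / 3 := by
        apply max_le _ (by linarith)
        have : Metric.infDist r' C ≤ φ (mseq T) + ε / 3 := le_trans hr' hφle
        linarith
      linarith
    have hfinal : Metric.infDist (rseq T) {r | Metric.infDist r C ≤ φ (mseq T)} < ε := by
      calc Metric.infDist (rseq T) {r | Metric.infDist r C ≤ φ (mseq T)}
          ≤ Metric.infDist r' {r | Metric.infDist r C ≤ φ (mseq T)} + dist (rseq T) r' :=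
            Metric.infDist_le_infDist_add_dist
        _ < ε / 3 + δ' := by linarith
        _ ≤ ε / 3 + ε / 3 := by
            have := min_le_right δ0 (ε / 3); linarith
        _ < ε := by linarith
    rw [Real.dist_eq, sub_zero, abs_of_nonneg Metric.infDist_nonneg]
    exact hfinal
end

section
/- Let C ⊆ ℝ^d be nonempty and closed, let K ⊆ ℝ^k be nonempty and compact, let φ : K → [0,∞) be continuous, and let ω : [0,∞) → [0,∞) be nondecreasing with |φ(m) − φ(m')| ≤ ω(‖m − m'‖₂) for all m, m' ∈ K. Then for every (m, r) ∈ K × ℝ^d, dist(r, C_{φ(m)}) ≤ 2·D + ω(D), where D := dist((m, r), G_φ) is computed with respect to the product metric dist((m,r),(m',r')) = max{‖m−m'‖₂, ‖r−r'‖₂} on K × ℝ^d. -/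
/-- quantitative comparison between the distance to the fiber `C_{φ(m)}` and
the distance `D` to the graph set `G_φ` (product max-metric): `dist(r, C_{φ(m)}) ≤ 2D + ω(D)`,
where `ω` is a modulus of continuity of `φ` on `K`. -/
theorem stmt5 {d k : ℕ}
    (C : Set (EuclideanSpace ℝ (Fin d))) (hCne : C.Nonempty) (hCcl : IsClosed C)
    (K : Set (EuclideanSpace ℝ (Fin k))) (hKne : K.Nonempty) (hKcomp : IsCompact K)
    (φ : EuclideanSpace ℝ (Fin k) → ℝ) (hφ0 : ∀ m ∈ K, 0 ≤ φ m)
    (hφcont : ContinuousOn φ K)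
    (ω : ℝ → ℝ) (hω0 : ∀ s : ℝ, 0 ≤ s → 0 ≤ ω s)
    (hωmono : ∀ s t : ℝ, 0 ≤ s → s ≤ t → ω s ≤ ω t)
    (hmod : ∀ m ∈ K, ∀ m' ∈ K, |φ m - φ m'| ≤ ω ‖m - m'‖)
    (m : EuclideanSpace ℝ (Fin k)) (hm : m ∈ K) (r : EuclideanSpace ℝ (Fin d)) :
    Metric.infDist r {y | Metric.infDist y C ≤ φ m}
      ≤ 2 * Metric.infDist (m, r)
            {p : EuclideanSpace ℝ (Fin k) × EuclideanSpace ℝ (Fin d) |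
              p.1 ∈ K ∧ Metric.infDist p.2 C ≤ φ p.1}
        + ω (Metric.infDist (m, r)
            {p : EuclideanSpace ℝ (Fin k) × EuclideanSpace ℝ (Fin d) |
              p.1 ∈ K ∧ Metric.infDist p.2 C ≤ φ p.1}) := by
  set F : Set (EuclideanSpace ℝ (Fin d)) := {y | Metric.infDist y C ≤ φ m} with hF
  set G : Set (EuclideanSpace ℝ (Fin k) × EuclideanSpace ℝ (Fin d)) :=
    {p | p.1 ∈ K ∧ Metric.infDist p.2 C ≤ φ p.1} with hGdef
  obtain ⟨c₀, hc₀⟩ := hCne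
  have hGne : G.Nonempty :=
    ⟨(m, c₀), hm, by simp [Metric.infDist_zero_of_mem hc₀, hφ0 m hm]⟩
  have hGcl : IsClosed G := by
    have hEq : G = (K ×ˢ (Set.univ : Set (EuclideanSpace ℝ (Fin d)))) ∩
        (fun p : EuclideanSpace ℝ (Fin k) × EuclideanSpace ℝ (Fin d) =>
          Metric.infDist p.2 C - φ p.1) ⁻¹' Set.Iic 0 := by
      ext p
      simp [hGdef, Set.mem_prod, sub_nonpos, and_comm]
    rw [hEq]
    refine ContinuousOn.preimage_isClosed_of_isClosed ?_ ?_ isClosed_Iic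
    · exact ((Metric.continuous_infDist_pt C).comp continuous_snd).continuousOn.sub
        (hφcont.comp continuous_fst.continuousOn (fun p hp => hp.1))
    · exact hKcomp.isClosed.prod isClosed_univ
  obtain ⟨p, hpG, hpd⟩ := hGcl.exists_infDist_eq_dist hGne (m, r)
  set D := Metric.infDist (m, r) G with hD
  have hD0 : 0 ≤ D := Metric.infDist_nonneg
  have hωD : 0 ≤ ω D := hω0 D hD0
  have hdm : dist m p.1 ≤ D := by
    rw [hpd, Prod.dist_eq]; exact le_max_left _ _
  have hdr : dist r p.2 ≤ D := by
    rw [hpd, Prod.dist_eq]; exact le_max_right _ _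
  have hφp : φ p.1 ≤ φ m + ω D := by
    have h1 := hmod p.1 hpG.1 m hm
    have h2 : ‖p.1 - m‖ ≤ D := by
      rw [← dist_eq_norm, dist_comm]; exact hdm
    have h3 : ω ‖p.1 - m‖ ≤ ω D := hωmono _ _ (norm_nonneg _) h2
    have := abs_le.mp h1
    linarith [this.1, this.2]
  by_cases hcase : Metric.infDist p.2 C ≤ φ m
  · have hmem : p.2 ∈ F := hcase
    have : Metric.infDist r F ≤ dist r p.2 := Metric.infDist_le_dist_of_mem hmem
    linarith
  · push_neg at hcase
    have hφm0 : 0 ≤ φ m := hφ0 m hm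
    have key : ∀ ε > 0, Metric.infDist r F ≤ 2 * D + ω D + ε := by
      intro ε hε
      obtain ⟨c, hcC, hc⟩ := (Metric.infDist_lt_iff ⟨c₀, hc₀⟩).mp
        (show Metric.infDist p.2 C < Metric.infDist p.2 C + ε by linarith)
      set ρ := dist p.2 c with hρ
      have hρpos : φ m < ρ := lt_of_lt_of_le hcase (Metric.infDist_le_dist_of_mem hcC)
      have hρ0 : (0:ℝ) < ρ := lt_of_le_of_lt hφm0 hρpos
      set y : EuclideanSpace ℝ (Fin d) := c + (φ m / ρ) • (p.2 - c) with hy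
      have hyc : dist y c = φ m := by
        rw [dist_eq_norm]
        have : y - c = (φ m / ρ) • (p.2 - c) := by rw [hy]; abel
        rw [this, norm_smul, ← dist_eq_norm, ← hρ, Real.norm_eq_abs,
          abs_of_nonneg (div_nonneg hφm0 hρ0.le)]
        field_simp
      have hyF : y ∈ F := by
        show Metric.infDist y C ≤ φ m
        calc Metric.infDist y C ≤ dist y c := Metric.infDist_le_dist_of_mem hcC
          _ = φ m := hyc
      have hpy : dist p.2 y = ρ - φ m := by
        rw [dist_eq_norm]
        have : p.2 - y = (1 - φ m / ρ) • (p.2 - c) := by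
          rw [hy, sub_smul, one_smul]; abel
        rw [this, norm_smul, Real.norm_eq_abs,
          abs_of_nonneg (by rw [sub_nonneg]; exact (div_le_one hρ0).mpr hρpos.le),
          ← dist_eq_norm, ← hρ]
        field_simp
      have h1 : Metric.infDist r F ≤ dist r y := Metric.infDist_le_dist_of_mem hyF
      have h2 : dist r y ≤ dist r p.2 + dist p.2 y := dist_triangle _ _ _
      have h3 : ρ < Metric.infDist p.2 C + ε := hc
      have h4 : Metric.infDist p.2 C ≤ φ p.1 := hpG.2
      rw [hpy] at h2
      linarith
    have := le_of_forall_pos_le_add key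
    linarith
end

section
/- In Example 1, the target function φ* is not achievable: for every strategy of the decision maker, i.e. every function σ mapping finite sequences (lists) of elements of [0,1] to [0,1], there exists a sequence (ν_t)_{t≥1} in [0,1] such that, setting x_t := σ(ν_1,…,ν_{t−1}), r̄_T := (1/T)·Σ_{t=1}^T r(x_t, ν_t) ∈ ℝ² and ν̄_T := (1/T)·Σ_{t=1}^T ν_t, the sequence T ↦ max{0, (r̄_T)₁ − φ*(ν̄_T), (r̄_T)₂ − φ*(ν̄_T)} does not converge to 0 as T → ∞. -/
/-- Example 1 payoff: `r(x, ν) = (5 − x − ν(5 − 4x), 3x + ν(5 − 4x))`. -/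
noncomputable def payEx1 (x ν : ℝ) : ℝ × ℝ :=
  (5 - x - ν * (5 - 4 * x), 3 * x + ν * (5 - 4 * x))

/-- Example 1 best-response target function:
`φ*(ν) = min_{x ∈ [0,1]} max{5 − x − ν(5 − 4x), 3x + ν(5 − 4x)}`. -/
noncomputable def phiStarEx1 (ν : ℝ) : ℝ :=
  sInf ((fun x => max (5 - x - ν * (5 - 4 * x)) (3 * x + ν * (5 - 4 * x))) '' Set.Icc (0 : ℝ) 1)

/-- The action played at round `t` by the strategy `σ` against the sequence `ν`:
`x_t = σ(ν₁, …, ν_{t−1})`. -/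
noncomputable def xSeqEx1 (σ : List ℝ → ℝ) (ν : ℕ → ℝ) (t : ℕ) : ℝ :=
  σ (List.ofFn fun i : Fin (t - 1) => ν (i + 1))

/-- Average payoff `r̄_T = (1/T) ∑_{t=1}^T r(x_t, ν_t)`. -/
noncomputable def rbarEx1 (σ : List ℝ → ℝ) (ν : ℕ → ℝ) (T : ℕ) : ℝ × ℝ :=
  (T : ℝ)⁻¹ • ∑ t ∈ Finset.Icc 1 T, payEx1 (xSeqEx1 σ ν t) (ν t)

/-- Average `ν̄_T = (1/T) ∑_{t=1}^T ν_t`. -/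
noncomputable def nubarEx1 (ν : ℕ → ℝ) (T : ℕ) : ℝ :=
  (T : ℝ)⁻¹ * ∑ t ∈ Finset.Icc 1 T, ν t

/- ===== auxiliary development ===== -/


open Finset

def Sseq : ℕ → ℕ
  | 0 => 0
  | k + 1 => Sseq k + 200 * (Sseq k + 1)

lemma Sseq_mono : Monotone Sseq :=
  monotone_nat_of_le_succ fun k => Nat.le_add_right _ _

lemma Sseq_ge (k : ℕ) : k ≤ Sseq k := by
  induction k with
  | zero => simp [Sseq]
  | succ n ih => show n + 1 ≤ Sseq n + 200 * (Sseq n + 1); omega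

open scoped Classical in
noncomputable def nuseq : ℕ → ℝ := fun t =>
  if ∃ k, Sseq k < t ∧ t ≤ Sseq k + 100 * (Sseq k + 1) then 0 else 1

lemma nuseq_zero {k t : ℕ} (h1 : Sseq k < t) (h2 : t ≤ Sseq k + 100 * (Sseq k + 1)) :
    nuseq t = 0 := by
  rw [nuseq, if_pos ⟨k, h1, h2⟩]

lemma nuseq_one {k t : ℕ} (h1 : Sseq k + 100 * (Sseq k + 1) < t) (h2 : t ≤ Sseq (k + 1)) :
    nuseq t = 1 := by
  rw [nuseq, if_neg]
  rintro ⟨k', hk1, hk2⟩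
  rcases le_or_gt k' k with h | h
  · have h3 := Sseq_mono h
    omega
  · have h4 : Sseq (k + 1) ≤ Sseq k' := Sseq_mono h
    omega

lemma nuseq_mem (t : ℕ) : nuseq t ∈ Set.Icc (0 : ℝ) 1 := by
  rw [nuseq]; split <;> norm_num

lemma phiStar_le (ν x : ℝ) (hx : x ∈ Set.Icc (0 : ℝ) 1) :
    phiStarEx1 ν ≤ max (5 - x - ν * (5 - 4 * x)) (3 * x + ν * (5 - 4 * x)) := by
  apply csInf_le
  · refine ⟨0, ?_⟩
    rintro y ⟨x', hx', rfl⟩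
    have h1 := le_max_left (5 - x' - ν * (5 - 4 * x')) (3 * x' + ν * (5 - 4 * x'))
    have h2 := le_max_right (5 - x' - ν * (5 - 4 * x')) (3 * x' + ν * (5 - 4 * x'))
    have := hx'.1
    nlinarith
  · exact ⟨x, hx, rfl⟩

lemma phiStar_le_four {ν : ℝ} (hν : ν ∈ Set.Icc (0 : ℝ) 1) : phiStarEx1 ν ≤ 4 := by
  have h := phiStar_le ν 1 (by norm_num)
  have h1 := hν.1; have h2 := hν.2
  refine le_trans h (max_le (by nlinarith) (by nlinarith))

lemma phiStar_le_max (ν : ℝ) : phiStarEx1 ν ≤ max (5 - 5 * ν) (5 * ν) := by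
  have h := phiStar_le ν 0 (by norm_num)
  refine le_trans h (le_of_eq ?_)
  norm_num [mul_comm]

lemma pay_fst_nonneg {x ν : ℝ} (hx : x ∈ Set.Icc (0 : ℝ) 1) (hν : ν ∈ Set.Icc (0 : ℝ) 1) :
    0 ≤ (payEx1 x ν).1 := by
  have h1 := hx.1; have h2 := hx.2; have h3 := hν.1; have h4 := hν.2
  simp only [payEx1]
  nlinarith

lemma pay_snd_nonneg {x ν : ℝ} (hx : x ∈ Set.Icc (0 : ℝ) 1) (hν : ν ∈ Set.Icc (0 : ℝ) 1) :
    0 ≤ (payEx1 x ν).2 := by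
  have h1 := hx.1; have h2 := hx.2; have h3 := hν.1; have h4 := hν.2
  simp only [payEx1]
  nlinarith

lemma rbar_fst (σ : List ℝ → ℝ) (ν : ℕ → ℝ) (T : ℕ) :
    (rbarEx1 σ ν T).1 = (T : ℝ)⁻¹ * ∑ t ∈ Finset.Ioc 0 T, (payEx1 (xSeqEx1 σ ν t) (ν t)).1 := by
  rw [rbarEx1, ← Finset.Icc_add_one_left_eq_Ioc 0 T, zero_add]
  show (T : ℝ)⁻¹ * (∑ t ∈ Finset.Icc 1 T, payEx1 (xSeqEx1 σ ν t) (ν t)).1 = _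
  rw [Prod.fst_sum]

lemma rbar_snd (σ : List ℝ → ℝ) (ν : ℕ → ℝ) (T : ℕ) :
    (rbarEx1 σ ν T).2 = (T : ℝ)⁻¹ * ∑ t ∈ Finset.Ioc 0 T, (payEx1 (xSeqEx1 σ ν t) (ν t)).2 := by
  rw [rbarEx1, ← Finset.Icc_add_one_left_eq_Ioc 0 T, zero_add]
  show (T : ℝ)⁻¹ * (∑ t ∈ Finset.Icc 1 T, payEx1 (xSeqEx1 σ ν t) (ν t)).2 = _
  rw [Prod.snd_sum]

lemma nubar_eq (ν : ℕ → ℝ) (T : ℕ) :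
    nubarEx1 ν T = (T : ℝ)⁻¹ * ∑ t ∈ Finset.Ioc 0 T, ν t := by
  rw [nubarEx1, ← Finset.Icc_add_one_left_eq_Ioc 0 T, zero_add]

/-- key epoch lemma -/
lemma key (σ : List ℝ → ℝ)
    (hσ : ∀ l : List ℝ, (∀ v ∈ l, v ∈ Set.Icc (0 : ℝ) 1) → σ l ∈ Set.Icc (0 : ℝ) 1) (k : ℕ) :
    (1/5 : ℝ) ≤ max 0 (max ((rbarEx1 σ nuseq (Sseq k + 100 * (Sseq k + 1))).1
        - phiStarEx1 (nubarEx1 nuseq (Sseq k + 100 * (Sseq k + 1))))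
        ((rbarEx1 σ nuseq (Sseq k + 100 * (Sseq k + 1))).2
        - phiStarEx1 (nubarEx1 nuseq (Sseq k + 100 * (Sseq k + 1))))) ∨
    (1/5 : ℝ) ≤ max 0 (max ((rbarEx1 σ nuseq (Sseq (k+1))).1
        - phiStarEx1 (nubarEx1 nuseq (Sseq (k+1))))
        ((rbarEx1 σ nuseq (Sseq (k+1))).2
        - phiStarEx1 (nubarEx1 nuseq (Sseq (k+1))))) := by
  set s := Sseq k with hs
  set L := 100 * (s + 1) with hL
  have hSsucc : Sseq (k + 1) = s + 2 * L := by show Sseq k + 200 * (Sseq k + 1) = _; omega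
  have hX : ∀ t, xSeqEx1 σ nuseq t ∈ Set.Icc (0 : ℝ) 1 := by
    intro t
    apply hσ
    intro v hv
    rw [List.mem_ofFn] at hv
    obtain ⟨i, rfl⟩ := hv
    exact nuseq_mem _
  set X : ℕ → ℝ := fun t => xSeqEx1 σ nuseq t with hXdef
  set g1 : ℕ → ℝ := fun t => (payEx1 (X t) (nuseq t)).1 with hg1
  set g2 : ℕ → ℝ := fun t => (payEx1 (X t) (nuseq t)).2 with hg2
  set A : ℝ := ∑ t ∈ Ioc s (s + L), X t with hA
  have hnu0 : ∀ t ∈ Ioc s (s + L), nuseq t = 0 := by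
    intro t ht
    rw [mem_Ioc] at ht
    exact nuseq_zero ht.1 (by omega)
  have hnu1 : ∀ t ∈ Ioc (s + L) (s + 2 * L), nuseq t = 1 := by
    intro t ht
    rw [mem_Ioc] at ht
    exact nuseq_one (k := k) (by omega) (by omega)
  have hcard1 : (Ioc s (s + L)).card = L := by rw [Nat.card_Ioc]; omega
  have hcard2 : (Ioc (s + L) (s + 2 * L)).card = L := by rw [Nat.card_Ioc]; omega
  have hA0 : 0 ≤ A := Finset.sum_nonneg fun t _ => (hX t).1
  have hAL : A ≤ (L : ℝ) := by
    calc A ≤ ∑ _t ∈ Ioc s (s + L), (1 : ℝ) := Finset.sum_le_sum fun t _ => (hX t).2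
    _ = L := by rw [Finset.sum_const, hcard1, nsmul_eq_mul, mul_one]
  have hblock1_fst : ∑ t ∈ Ioc s (s + L), g1 t = 5 * L - A := by
    have heq : ∑ t ∈ Ioc s (s + L), g1 t = ∑ t ∈ Ioc s (s + L), (5 - X t) := by
      apply Finset.sum_congr rfl
      intro t ht
      rw [hg1]; simp only; rw [hnu0 t ht]; simp [payEx1]
    rw [heq, Finset.sum_sub_distrib, Finset.sum_const, hcard1, nsmul_eq_mul, mul_comm, ← hA]
  have hblock1_snd : ∑ t ∈ Ioc s (s + L), g2 t = 3 * A := by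
    have heq : ∑ t ∈ Ioc s (s + L), g2 t = ∑ t ∈ Ioc s (s + L), 3 * X t := by
      apply Finset.sum_congr rfl
      intro t ht
      rw [hg2]; simp only; rw [hnu0 t ht]; simp [payEx1]
    rw [heq, ← Finset.mul_sum, ← hA]
  have hblock2_snd : (4 : ℝ) * L ≤ ∑ t ∈ Ioc (s + L) (s + 2 * L), g2 t := by
    calc (4 : ℝ) * L = ∑ _t ∈ Ioc (s + L) (s + 2 * L), (4 : ℝ) := by
          rw [Finset.sum_const, hcard2, nsmul_eq_mul, mul_comm]
    _ ≤ _ := by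
          apply Finset.sum_le_sum
          intro t ht
          rw [hg2]; simp only; rw [hnu1 t ht]
          simp only [payEx1]
          have := (hX t).2
          linarith
  have hpre1 : 0 ≤ ∑ t ∈ Ioc 0 s, g1 t :=
    Finset.sum_nonneg fun t _ => pay_fst_nonneg (hX t) (nuseq_mem t)
  have hpre2 : 0 ≤ ∑ t ∈ Ioc 0 s, g2 t :=
    Finset.sum_nonneg fun t _ => pay_snd_nonneg (hX t) (nuseq_mem t)
  have hnusum_pre_lb : 0 ≤ ∑ t ∈ Ioc 0 s, nuseq t :=
    Finset.sum_nonneg fun t _ => (nuseq_mem t).1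
  have hnusum_pre_ub : ∑ t ∈ Ioc 0 s, nuseq t ≤ (s : ℝ) := by
    calc ∑ t ∈ Ioc 0 s, nuseq t ≤ ∑ _t ∈ Ioc 0 s, (1 : ℝ) :=
      Finset.sum_le_sum fun t _ => (nuseq_mem t).2
    _ = s := by rw [Finset.sum_const, Nat.card_Ioc, nsmul_eq_mul, mul_one]; norm_num
  have hnusum_blk1 : ∑ t ∈ Ioc s (s + L), nuseq t = 0 :=
    Finset.sum_eq_zero hnu0
  have hnusum_blk2 : ∑ t ∈ Ioc (s + L) (s + 2 * L), nuseq t = L := by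
    rw [Finset.sum_congr rfl hnu1, Finset.sum_const, hcard2, nsmul_eq_mul, mul_one]
  have split1 : ∀ f : ℕ → ℝ, (∑ t ∈ Ioc 0 s, f t) + (∑ t ∈ Ioc s (s + L), f t)
      = ∑ t ∈ Ioc 0 (s + L), f t := fun f =>
    Finset.sum_Ioc_consecutive f (Nat.zero_le _) (by omega)
  have split2 : ∀ f : ℕ → ℝ, (∑ t ∈ Ioc 0 (s + L), f t) + (∑ t ∈ Ioc (s + L) (s + 2 * L), f t)
      = ∑ t ∈ Ioc 0 (s + 2 * L), f t := fun f =>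
    Finset.sum_Ioc_consecutive f (Nat.zero_le _) (by omega)
  -- casts
  have hLcast : (L : ℝ) = 100 * (s : ℝ) + 100 := by rw [hL]; push_cast; ring
  have hsnn : (0 : ℝ) ≤ (s : ℝ) := Nat.cast_nonneg s
  have hT1cast : ((s + L : ℕ) : ℝ) = (s : ℝ) + L := by push_cast; ring
  have hT2cast : ((s + 2 * L : ℕ) : ℝ) = (s : ℝ) + 2 * L := by push_cast; ring
  have hT1pos : (0 : ℝ) < ((s + L : ℕ) : ℝ) := by rw [hT1cast]; linarith
  have hT2pos : (0 : ℝ) < ((s + 2 * L : ℕ) : ℝ) := by rw [hT2cast]; linarith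
  rcases le_or_gt A (3/5 * L) with hcase | hcase
  · -- case 1: look at time T1 = s + L
    left
    set T1 := s + L with hT1
    have hP1 : (21/5 : ℝ) * ((s : ℝ) + L) ≤ ∑ t ∈ Ioc 0 T1, g1 t := by
      rw [← split1 g1, hblock1_fst]
      linarith
    have hN1 : nubarEx1 nuseq T1 ∈ Set.Icc (0 : ℝ) 1 := by
      rw [nubar_eq, ← split1 nuseq, hnusum_blk1, add_zero]
      constructor
      · positivity
      · rw [inv_mul_le_iff₀ hT1pos, mul_one, hT1cast]
        linarith
    have hphi : phiStarEx1 (nubarEx1 nuseq T1) ≤ 4 := phiStar_le_four hN1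
    have hrb : (21/5 : ℝ) ≤ (rbarEx1 σ nuseq T1).1 := by
      rw [rbar_fst]
      calc (21/5 : ℝ) = ((T1 : ℕ) : ℝ)⁻¹ * ((21/5) * ((s : ℝ) + L)) := by
            rw [hT1cast]; field_simp [(ne_of_gt (by linarith) : (s : ℝ) + L ≠ 0)]
      _ ≤ _ := by
            apply mul_le_mul_of_nonneg_left hP1 (le_of_lt (inv_pos.2 hT1pos))
    refine le_trans ?_ (le_max_of_le_right (le_max_left _ _))
    linarith
  · -- case 2: look at time T2 = s + 2L = Sseq (k+1)
    right
    rw [hSsucc]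
    set T2 := s + 2 * L with hT2
    have hP2 : (3 * A + 4 * L : ℝ) ≤ ∑ t ∈ Ioc 0 T2, g2 t := by
      rw [← split2 g2, ← split1 g2, hblock1_snd]
      linarith
    have hN2lb : (L : ℝ) ≤ ∑ t ∈ Ioc 0 T2, nuseq t := by
      rw [← split2 nuseq, ← split1 nuseq, hnusum_blk1, hnusum_blk2]
      linarith
    have hN2ub : ∑ t ∈ Ioc 0 T2, nuseq t ≤ (s : ℝ) + L := by
      rw [← split2 nuseq, ← split1 nuseq, hnusum_blk1, hnusum_blk2]
      linarith
    have hphi : phiStarEx1 (nubarEx1 nuseq T2) ≤ ((T2 : ℕ) : ℝ)⁻¹ * (5 * ((s : ℝ) + L)) := by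
      refine le_trans (phiStar_le_max _) (max_le ?_ ?_)
      · rw [nubar_eq]
        have h5 : 5 * (((T2 : ℕ) : ℝ)⁻¹ * (L : ℝ)) ≤ 5 * (((T2 : ℕ) : ℝ)⁻¹ * ∑ t ∈ Ioc 0 T2, nuseq t) := by
          apply mul_le_mul_of_nonneg_left _ (by norm_num)
          exact mul_le_mul_of_nonneg_left hN2lb (le_of_lt (inv_pos.2 hT2pos))
        have h6 : 5 - 5 * (((T2 : ℕ) : ℝ)⁻¹ * (L : ℝ)) = ((T2 : ℕ) : ℝ)⁻¹ * (5 * ((s : ℝ) + L)) := by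
          rw [hT2cast]
          field_simp [(ne_of_gt (by linarith) : (s : ℝ) + 2 * L ≠ 0)]
          ring
        linarith
      · rw [nubar_eq, ← mul_assoc, mul_comm (5 : ℝ), mul_assoc]
        apply mul_le_mul_of_nonneg_left _ (le_of_lt (inv_pos.2 hT2pos))
        linarith
    have hrb : ((T2 : ℕ) : ℝ)⁻¹ * (3 * A + 4 * L) ≤ (rbarEx1 σ nuseq T2).2 := by
      rw [rbar_snd]
      exact mul_le_mul_of_nonneg_left hP2 (le_of_lt (inv_pos.2 hT2pos))
    have hkey : (1/5 : ℝ) ≤ ((T2 : ℕ) : ℝ)⁻¹ * (3 * A + 4 * L) - ((T2 : ℕ) : ℝ)⁻¹ * (5 * ((s : ℝ) + L)) := by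
      rw [← mul_sub]
      have hgap : (1/5 : ℝ) * ((s : ℝ) + 2 * L) ≤ (3 * A + 4 * L) - 5 * ((s : ℝ) + L) := by
        linarith
      calc (1/5 : ℝ) = ((T2 : ℕ) : ℝ)⁻¹ * ((1/5) * ((s : ℝ) + 2 * L)) := by
            rw [hT2cast]; field_simp [(ne_of_gt (by linarith) : (s : ℝ) + 2 * L ≠ 0)]
      _ ≤ _ := mul_le_mul_of_nonneg_left hgap (le_of_lt (inv_pos.2 hT2pos))
    refine le_trans ?_ (le_max_of_le_right (le_max_right _ _))
    linarith

/-- in Example 1, the target function `φ*` is not achievable: for every strategy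
`σ` (mapping histories in `[0,1]` to mixed actions in `[0,1]`), there is a sequence `(ν_t)` in
`[0,1]` against which the sup-norm distance of `r̄_T` to `C_{φ*(ν̄_T)}` does not tend to `0`. -/
theorem stmt9 (σ : List ℝ → ℝ)
    (hσ : ∀ l : List ℝ, (∀ v ∈ l, v ∈ Set.Icc (0 : ℝ) 1) → σ l ∈ Set.Icc (0 : ℝ) 1) :
    ∃ ν : ℕ → ℝ, (∀ t : ℕ, 1 ≤ t → ν t ∈ Set.Icc (0 : ℝ) 1) ∧
      ¬ Filter.Tendsto
          (fun T : ℕ =>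
            max 0 (max ((rbarEx1 σ ν T).1 - phiStarEx1 (nubarEx1 ν T))
              ((rbarEx1 σ ν T).2 - phiStarEx1 (nubarEx1 ν T))))
          Filter.atTop (nhds 0) := by
  refine ⟨nuseq, fun t _ => nuseq_mem t, ?_⟩
  intro h
  have hev : ∀ᶠ T in Filter.atTop, (fun T : ℕ =>
      max 0 (max ((rbarEx1 σ nuseq T).1 - phiStarEx1 (nubarEx1 nuseq T))
        ((rbarEx1 σ nuseq T).2 - phiStarEx1 (nubarEx1 nuseq T)))) T < 1/5 :=
    h.eventually (gt_mem_nhds (by norm_num : (0 : ℝ) < 1/5))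
  obtain ⟨K, hK⟩ := Filter.eventually_atTop.1 hev
  have h1 : K ≤ Sseq K + 100 * (Sseq K + 1) := le_trans (Sseq_ge K) (Nat.le_add_right _ _)
  have h2 : K ≤ Sseq (K + 1) := le_trans (Nat.le_succ K) (Sseq_ge (K + 1))
  rcases key σ hσ K with hk | hk
  · exact absurd (hK _ h1) (not_lt.2 hk)
  · exact absurd (hK _ h2) (not_lt.2 hk)
end

section
/- In Example 1, define α₁(ν) := max{4−ν, 3+ν} for ν ∈ [0,1]. Then: (i) α₁ is achieved exactly by the constant strategy x_t = 1, i.e. for every sequence (ν_t)_{t≥1} in [0,1] and every T ≥ 1, the average payoff r̄_T := (1/T)·Σ_{t=1}^T r(1, ν_t) equals (4−ν̄_T, 3+ν̄_T) where ν̄_T := (1/T)·Σ_{t=1}^T ν_t, and max{0, (r̄_T)₁ − α₁(ν̄_T), (r̄_T)₂ − α₁(ν̄_T)} = 0; (ii) α₁(ν) ≤ 4 for all ν ∈ [0,1], with strict inequality α₁(ν) < 4 for all ν ∈ (0,1). Hence α₁ is an achievable target function strictly smaller than cav[φ*] ≡ 4. -/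
/-- The target function `α₁(ν) = max{4 − ν, 3 + ν}` of Example 1. -/
noncomputable def alphaOne (ν : ℝ) : ℝ := max (4 - ν) (3 + ν)

/-- in Example 1, `α₁(ν) = max{4 − ν, 3 + ν}` is achieved exactly by the constant
strategy `x_t = 1`: the average payoff is `(4 − ν̄_T, 3 + ν̄_T)` and its sup-norm distance to
`C_{α₁(ν̄_T)}` is `0`; moreover `α₁ ≤ 4` on `[0,1]` with strict inequality on `(0,1)`.
Hence `α₁` is an achievable target function strictly smaller than `cav[φ*] ≡ 4`. -/
theorem stmt12 :
    (∀ ν : ℕ → ℝ, (∀ t : ℕ, 1 ≤ t → ν t ∈ Set.Icc (0 : ℝ) 1) → ∀ T : ℕ, 1 ≤ T →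
      ((T : ℝ)⁻¹ • ∑ t ∈ Finset.Icc 1 T, payEx1 1 (ν t))
          = ((4 - nubarEx1 ν T, 3 + nubarEx1 ν T) : ℝ × ℝ) ∧
        max 0 (max (((T : ℝ)⁻¹ • ∑ t ∈ Finset.Icc 1 T, payEx1 1 (ν t)).1
            - alphaOne (nubarEx1 ν T))
          (((T : ℝ)⁻¹ • ∑ t ∈ Finset.Icc 1 T, payEx1 1 (ν t)).2
            - alphaOne (nubarEx1 ν T))) = 0) ∧
    (∀ ν ∈ Set.Icc (0 : ℝ) 1, alphaOne ν ≤ 4) ∧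
    (∀ ν ∈ Set.Ioo (0 : ℝ) 1, alphaOne ν < 4) := by

  have key : ∀ ν : ℕ → ℝ, ∀ T : ℕ, 1 ≤ T →
      ((T : ℝ)⁻¹ • ∑ t ∈ Finset.Icc 1 T, payEx1 1 (ν t))
        = ((4 - nubarEx1 ν T, 3 + nubarEx1 ν T) : ℝ × ℝ) := by
    intro ν T hT
    have hT0 : (T : ℝ) ≠ 0 := by positivity
    have hsum : ∑ t ∈ Finset.Icc 1 T, payEx1 1 (ν t)
        = ((4 * T - ∑ t ∈ Finset.Icc 1 T, ν t, 3 * T + ∑ t ∈ Finset.Icc 1 T, ν t) : ℝ × ℝ) := by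
      ext
      · simp [payEx1, Prod.fst_sum, Finset.sum_sub_distrib, Nat.card_Icc, mul_comm]
        norm_num
        ring
      · simp [payEx1, Prod.snd_sum, Finset.sum_add_distrib, Nat.card_Icc, mul_comm]
        norm_num
    rw [hsum]
    ext
    · simp only [Prod.smul_fst, smul_eq_mul, nubarEx1]
      field_simp
    · simp only [Prod.smul_snd, smul_eq_mul, nubarEx1]
      field_simp
  refine ⟨fun ν hν T hT => ⟨key ν T hT, ?_⟩, fun ν hν => ?_, fun ν hν => ?_⟩
  · rw [key ν T hT]
    have h1 : 4 - nubarEx1 ν T - alphaOne (nubarEx1 ν T) ≤ 0 := by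
      simp [alphaOne]
    have h2 : 3 + nubarEx1 ν T - alphaOne (nubarEx1 ν T) ≤ 0 := by
      simp [alphaOne]
    exact max_eq_left (max_le h1 h2)
  · simp only [alphaOne]
    exact max_le (by linarith [hν.1]) (by linarith [hν.2])
  · simp only [alphaOne]
    exact max_lt (by linarith [hν.1]) (by linarith [hν.2])
end

section
/- In Example 1, define x* : [0,1] → {0,1} by x*(ν) = 0 if 1/4 ≤ ν ≤ 3/4 and x*(ν) = 1 otherwise, and set p(ν) := r(x*(ν), ν) ∈ ℝ². Then for every ν ∈ [0,1]: (a) for every N ≥ 1, all weights λ₁,…,λ_N ≥ 0 with Σᵢ λᵢ = 1 and all ν₁,…,ν_N ∈ [0,1] with Σᵢ λᵢ·νᵢ = ν, one has max{0, (Σᵢ λᵢ·p(νᵢ))₁, (Σᵢ λᵢ·p(νᵢ))₂} ≤ max{4−ν, 3+ν}; and (b) this bound is attained: the decomposition ν = ν·1 + (1−ν)·0 gives max{0, (ν·p(1)+(1−ν)·p(0))₁, (ν·p(1)+(1−ν)·p(0))₂} = max{4−ν, 3+ν}. Hence φ^{x*}(ν), the supremum of the left-hand quantity in (a) over all finite convex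 decompositions of ν, equals α₁(ν) = max{4−ν, 3+ν}. -/
/-- The best-response selector of Example 1: `x*(ν) = 0` if `1/4 ≤ ν ≤ 3/4`, else `x*(ν) = 1`. -/
noncomputable def xstarEx1 (ν : ℝ) : ℝ := if 1 / 4 ≤ ν ∧ ν ≤ 3 / 4 then 0 else 1

/-- `p(ν) = r(x*(ν), ν)`. -/
noncomputable def pEx1 (ν : ℝ) : ℝ × ℝ := payEx1 (xstarEx1 ν) ν


lemma pEx1_fst_le {ν : ℝ} (h : ν ∈ Set.Icc (0 : ℝ) 1) : (pEx1 ν).1 ≤ 4 - ν := by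
  obtain ⟨h0, h1⟩ := h
  unfold pEx1 xstarEx1 payEx1
  split_ifs with h
  · simp only
    linarith [h.1]
  · simp only
    linarith

lemma pEx1_snd_le {ν : ℝ} (h : ν ∈ Set.Icc (0 : ℝ) 1) : (pEx1 ν).2 ≤ 3 + ν := by
  obtain ⟨h0, h1⟩ := h
  unfold pEx1 xstarEx1 payEx1
  split_ifs with h
  · simp only
    linarith [h.2]
  · simp only
    linarith

lemma pEx1_one : pEx1 1 = (3, 4) := by
  unfold pEx1 xstarEx1 payEx1; norm_num

lemma pEx1_zero : pEx1 0 = (4, 3) := by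
  unfold pEx1 xstarEx1 payEx1; norm_num

/-- in Example 1, (a) for every finite convex decomposition `ν = ∑ λᵢ νᵢ` with
`νᵢ ∈ [0,1]`, the sup-norm distance of `∑ λᵢ p(νᵢ)` to the negative orthant is at most
`max{4 − ν, 3 + ν}`; (b) the bound is attained by the decomposition `ν = ν·1 + (1−ν)·0`;
hence `φ^{x*}(ν) = α₁(ν) = max{4 − ν, 3 + ν}`. -/
theorem stmt13 (ν : ℝ) (hν : ν ∈ Set.Icc (0 : ℝ) 1) :
    (∀ N : ℕ, 1 ≤ N → ∀ lam : Fin N → ℝ, ∀ νs : Fin N → ℝ,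
      (∀ i, 0 ≤ lam i) → (∑ i, lam i) = 1 → (∀ i, νs i ∈ Set.Icc (0 : ℝ) 1) →
      (∑ i, lam i * νs i) = ν →
      max 0 (max (∑ i, lam i • pEx1 (νs i)).1 (∑ i, lam i • pEx1 (νs i)).2)
        ≤ max (4 - ν) (3 + ν)) ∧
    max 0 (max ((ν • pEx1 1 + (1 - ν) • pEx1 0).1) ((ν • pEx1 1 + (1 - ν) • pEx1 0).2))
      = max (4 - ν) (3 + ν) ∧
    sSup {r : ℝ | ∃ N : ℕ, 1 ≤ N ∧ ∃ lam : Fin N → ℝ, ∃ νs : Fin N → ℝ,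
        (∀ i, 0 ≤ lam i) ∧ (∑ i, lam i) = 1 ∧ (∀ i, νs i ∈ Set.Icc (0 : ℝ) 1) ∧
        (∑ i, lam i * νs i) = ν ∧
        r = max 0 (max (∑ i, lam i • pEx1 (νs i)).1 (∑ i, lam i • pEx1 (νs i)).2)}
      = max (4 - ν) (3 + ν) := by

  obtain ⟨h0, h1⟩ := hν
  have partA : ∀ N : ℕ, 1 ≤ N → ∀ lam : Fin N → ℝ, ∀ νs : Fin N → ℝ,
      (∀ i, 0 ≤ lam i) → (∑ i, lam i) = 1 → (∀ i, νs i ∈ Set.Icc (0 : ℝ) 1) →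
      (∑ i, lam i * νs i) = ν →
      max 0 (max (∑ i, lam i • pEx1 (νs i)).1 (∑ i, lam i • pEx1 (νs i)).2)
        ≤ max (4 - ν) (3 + ν) := by
    intro N hN lam νs hlam hsum hνs hdec
    have hfst : (∑ i, lam i • pEx1 (νs i)).1 ≤ 4 - ν := by
      rw [Prod.fst_sum]
      have : ∀ i, (lam i • pEx1 (νs i)).1 ≤ lam i * (4 - νs i) := by
        intro i
        have := pEx1_fst_le (hνs i)
        have := hlam i
        simp only [Prod.smul_fst, smul_eq_mul]
        nlinarith
      calc (∑ i, (lam i • pEx1 (νs i)).1) ≤ ∑ i, lam i * (4 - νs i) :=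
            Finset.sum_le_sum fun i _ => this i
        _ = 4 - ν := by
            simp only [mul_sub]
            rw [Finset.sum_sub_distrib, ← Finset.sum_mul, hsum, hdec]; ring
    have hsnd : (∑ i, lam i • pEx1 (νs i)).2 ≤ 3 + ν := by
      rw [Prod.snd_sum]
      have : ∀ i, (lam i • pEx1 (νs i)).2 ≤ lam i * (3 + νs i) := by
        intro i
        have := pEx1_snd_le (hνs i)
        have := hlam i
        simp only [Prod.smul_snd, smul_eq_mul]
        nlinarith
      calc (∑ i, (lam i • pEx1 (νs i)).2) ≤ ∑ i, lam i * (3 + νs i) :=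
            Finset.sum_le_sum fun i _ => this i
        _ = 3 + ν := by
            simp only [mul_add]
            rw [Finset.sum_add_distrib, ← Finset.sum_mul, hsum, hdec]; ring
    have h3 : (0 : ℝ) ≤ 3 + ν := by linarith
    exact max_le (le_max_of_le_right h3)
      (max_le (le_max_of_le_left hfst) (le_max_of_le_right hsnd))
  have partB : max 0 (max ((ν • pEx1 1 + (1 - ν) • pEx1 0).1)
      ((ν • pEx1 1 + (1 - ν) • pEx1 0).2)) = max (4 - ν) (3 + ν) := by
    rw [pEx1_one, pEx1_zero]
    have e1 : (ν • ((3:ℝ), (4:ℝ)) + (1 - ν) • ((4:ℝ), (3:ℝ))).1 = 4 - ν := by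
      simp [Prod.smul_fst]; ring
    have e2 : (ν • ((3:ℝ), (4:ℝ)) + (1 - ν) • ((4:ℝ), (3:ℝ))).2 = 3 + ν := by
      simp [Prod.smul_snd]; ring
    rw [e1, e2, max_eq_right]
    exact le_max_of_le_right (by linarith)
  refine ⟨partA, partB, ?_⟩
  apply le_antisymm
  · apply Real.sSup_le
    · rintro r ⟨N, hN, lam, νs, hlam, hsum, hνs, hdec, rfl⟩
      exact partA N hN lam νs hlam hsum hνs hdec
    · exact le_max_of_le_right (by linarith)
  · apply le_csSup
    · exact ⟨max (4 - ν) (3 + ν), by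
        rintro r ⟨N, hN, lam, νs, hlam, hsum, hνs, hdec, rfl⟩
        exact partA N hN lam νs hlam hsum hνs hdec⟩
    · refine ⟨2, by norm_num, ![ν, 1 - ν], ![1, 0], ?_, ?_, ?_, ?_, ?_⟩
      · intro i; fin_cases i <;> simp <;> linarith
      · simp [Fin.sum_univ_two]
      · intro i; fin_cases i <;> simp <;> constructor <;> linarith
      · simp [Fin.sum_univ_two]
      · rw [← partB]; congr 1; congr 1
        · rw [Prod.fst_sum, Fin.sum_univ_two]; simp
        · rw [Prod.snd_sum, Fin.sum_univ_two]; simp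
end

section
/- In Example 2, the concavification of φ* over [−1,1]² is the function (v,w) ↦ 1 − |v−w|/2; precisely: (i) the function g(v,w) := 1 − |v−w|/2 is concave on ℝ² and satisfies φ*(v,w) ≤ g(v,w) for all (v,w) ∈ [−1,1]²; and (ii) every function g' : [−1,1]² → ℝ that is concave on [−1,1]² and satisfies g'(v,w) ≥ φ*(v,w) for all (v,w) ∈ [−1,1]² must satisfy g'(v,w) ≥ 1 − |v−w|/2 for all (v,w) ∈ [−1,1]². -/
/-- Example 2 best-response target function: `φ*(v,w) = min_{x ∈ [0,1]} |x·v + (1−x)·w|`. -/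
noncomputable def phiStarEx2 (p : ℝ × ℝ) : ℝ :=
  sInf ((fun x => |x * p.1 + (1 - x) * p.2|) '' Set.Icc (0 : ℝ) 1)

lemma phi_le (p : ℝ × ℝ) {x : ℝ} (hx : x ∈ Set.Icc (0 : ℝ) 1) :
    phiStarEx2 p ≤ |x * p.1 + (1 - x) * p.2| := by
  apply csInf_le
  · exact ⟨0, fun y hy => by rcases hy with ⟨z, _, rfl⟩; positivity⟩
  · exact ⟨x, hx, rfl⟩

lemma phi_nonneg (p : ℝ × ℝ) : 0 ≤ phiStarEx2 p := by
  refine le_csInf ⟨_, ⟨0, by norm_num, rfl⟩⟩ ?_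
  rintro y ⟨x, _, rfl⟩; positivity

lemma le_phi_diag (t : ℝ) : |t| ≤ phiStarEx2 (t, t) := by
  refine le_csInf ⟨_, ⟨0, by norm_num, rfl⟩⟩ ?_
  rintro y ⟨x, _, rfl⟩
  simp only
  have : x * t + (1 - x) * t = t := by ring
  rw [this]

/-- in Example 2, the concavification of `φ*` over `[−1,1]²` is
`(v,w) ↦ 1 − |v−w|/2`: (i) this function is concave on `ℝ²` and majorizes `φ*` on `[−1,1]²`;
(ii) every concave function on `[−1,1]²` majorizing `φ*` there is at least `1 − |v−w|/2`. -/
theorem stmt15 :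
    (ConcaveOn ℝ (Set.univ : Set (ℝ × ℝ)) (fun p : ℝ × ℝ => 1 - |p.1 - p.2| / 2) ∧
      ∀ p ∈ Set.Icc ((-1, -1) : ℝ × ℝ) (1, 1), phiStarEx2 p ≤ 1 - |p.1 - p.2| / 2) ∧
    (∀ g' : ℝ × ℝ → ℝ, ConcaveOn ℝ (Set.Icc ((-1, -1) : ℝ × ℝ) (1, 1)) g' →
      (∀ p ∈ Set.Icc ((-1, -1) : ℝ × ℝ) (1, 1), phiStarEx2 p ≤ g' p) →
      ∀ p ∈ Set.Icc ((-1, -1) : ℝ × ℝ) (1, 1), 1 - |p.1 - p.2| / 2 ≤ g' p) := by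
  refine ⟨⟨⟨convex_univ, ?_⟩, ?_⟩, ?_⟩
  · intro p _ q _ a b ha hb hab
    simp only [smul_eq_mul, Prod.fst_add, Prod.snd_add, Prod.smul_fst, Prod.smul_snd,
      smul_eq_mul]
    have h1 : |a * (p.1 - p.2) + b * (q.1 - q.2)| ≤ |a * (p.1 - p.2)| + |b * (q.1 - q.2)| :=
      abs_add_le _ _
    rw [abs_mul, abs_mul, abs_of_nonneg ha, abs_of_nonneg hb] at h1
    have h2 : a * p.1 + b * q.1 - (a * p.2 + b * q.2) = a * (p.1 - p.2) + b * (q.1 - q.2) := by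
      ring
    rw [h2]
    have e : a * (1 - |p.1 - p.2| / 2) + b * (1 - |q.1 - q.2| / 2)
        = (a + b) - (a * |p.1 - p.2| + b * |q.1 - q.2|) / 2 := by ring
    rw [e, hab]
    linarith
  · rintro ⟨v, w⟩ ⟨hlo, hhi⟩
    rw [Prod.mk_le_mk] at hlo hhi
    have hle := phi_le (v, w) (x := 1/2) (by norm_num)
    simp only at hle ⊢
    have key : |(1:ℝ)/2 * v + (1 - 1/2) * w| ≤ 1 - |v - w| / 2 := by
      rcases abs_cases ((1:ℝ)/2 * v + (1 - 1/2) * w) with ⟨e1, _⟩ | ⟨e1, _⟩ <;>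
        rcases abs_cases (v - w) with ⟨e2, _⟩ | ⟨e2, _⟩ <;> rw [e1, e2] <;>
          [linarith [hhi.1, hhi.2]; linarith [hhi.1, hlo.2];
           linarith [hlo.1, hlo.2]; linarith [hlo.1, hhi.2]]
    linarith
  · rintro g' hg' hmaj ⟨v, w⟩ ⟨hlo, hhi⟩
    rw [Prod.mk_le_mk] at hlo hhi
    obtain ⟨h1, h2⟩ := hlo
    obtain ⟨h3, h4⟩ := hhi
    have hm11 : ((1, 1) : ℝ × ℝ) ∈ Set.Icc ((-1, -1) : ℝ × ℝ) (1, 1) :=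
      ⟨Prod.mk_le_mk.mpr ⟨by norm_num, by norm_num⟩, Prod.mk_le_mk.mpr ⟨le_refl _, le_refl _⟩⟩
    have hmneg : ((-1, -1) : ℝ × ℝ) ∈ Set.Icc ((-1, -1) : ℝ × ℝ) (1, 1) :=
      ⟨Prod.mk_le_mk.mpr ⟨le_refl _, le_refl _⟩, Prod.mk_le_mk.mpr ⟨by norm_num, by norm_num⟩⟩
    have hg11 : (1:ℝ) ≤ g' (1, 1) := by
      have ha := le_phi_diag 1
      have hb := hmaj _ hm11
      rw [abs_one] at ha; linarith
    have hgneg : (1:ℝ) ≤ g' (-1, -1) := by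
      have ha := le_phi_diag (-1)
      have hb := hmaj _ hmneg
      rw [abs_neg, abs_one] at ha; linarith
    simp only
    rcases le_total w v with hvw | hvw
    · have hm1n : ((1, -1) : ℝ × ℝ) ∈ Set.Icc ((-1, -1) : ℝ × ℝ) (1, 1) :=
        ⟨Prod.mk_le_mk.mpr ⟨by norm_num, le_refl _⟩, Prod.mk_le_mk.mpr ⟨le_refl _, by norm_num⟩⟩
      have hg1n : (0:ℝ) ≤ g' (1, -1) := le_trans (phi_nonneg _) (hmaj _ hm1n)
      have key := hg'.le_map_sum (t := (Finset.univ : Finset (Fin 3)))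
        (w := ![(1 + w)/2, (1 - v)/2, (v - w)/2])
        (p := ![(1,1), (-1,-1), (1,-1)])
        (fun i _ => by
          fin_cases i
          · show (0:ℝ) ≤ (1 + w)/2; linarith
          · show (0:ℝ) ≤ (1 - v)/2; linarith
          · show (0:ℝ) ≤ (v - w)/2; linarith)
        (by simp [Fin.sum_univ_three]; ring)
        (fun i _ => by fin_cases i <;> first | exact hm11 | exact hmneg | exact hm1n)
      rw [Fin.sum_univ_three, Fin.sum_univ_three] at key
      simp only [Matrix.cons_val_zero, Matrix.cons_val_one, Matrix.head_cons,
        Matrix.cons_val_two, Matrix.tail_cons, smul_eq_mul] at key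
      have hsum : ((1 + w)/2 : ℝ) • ((1,1) : ℝ × ℝ) + ((1 - v)/2) • ((-1,-1) : ℝ × ℝ)
          + ((v - w)/2) • ((1,-1) : ℝ × ℝ) = (v, w) := by
        apply Prod.ext <;> simp [Prod.smul_fst, Prod.smul_snd, smul_eq_mul] <;> ring
      rw [hsum] at key
      rw [abs_of_nonneg (by linarith : (0:ℝ) ≤ v - w)]
      have e1 : ((1 + w)/2 : ℝ) * 1 ≤ (1 + w)/2 * g' (1, 1) :=
        mul_le_mul_of_nonneg_left hg11 (by linarith)
      have e2 : ((1 - v)/2 : ℝ) * 1 ≤ (1 - v)/2 * g' (-1, -1) :=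
        mul_le_mul_of_nonneg_left hgneg (by linarith)
      have e3 : (0:ℝ) ≤ (v - w)/2 * g' (1, -1) := mul_nonneg (by linarith) hg1n
      linarith
    · have hmn1 : ((-1, 1) : ℝ × ℝ) ∈ Set.Icc ((-1, -1) : ℝ × ℝ) (1, 1) :=
        ⟨Prod.mk_le_mk.mpr ⟨le_refl _, by norm_num⟩, Prod.mk_le_mk.mpr ⟨by norm_num, le_refl _⟩⟩
      have hgn1 : (0:ℝ) ≤ g' (-1, 1) := le_trans (phi_nonneg _) (hmaj _ hmn1)
      have key := hg'.le_map_sum (t := (Finset.univ : Finset (Fin 3)))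
        (w := ![(1 + v)/2, (1 - w)/2, (w - v)/2])
        (p := ![(1,1), (-1,-1), (-1,1)])
        (fun i _ => by
          fin_cases i
          · show (0:ℝ) ≤ (1 + v)/2; linarith
          · show (0:ℝ) ≤ (1 - w)/2; linarith
          · show (0:ℝ) ≤ (w - v)/2; linarith)
        (by simp [Fin.sum_univ_three]; ring)
        (fun i _ => by fin_cases i <;> first | exact hm11 | exact hmneg | exact hmn1)
      rw [Fin.sum_univ_three, Fin.sum_univ_three] at key
      simp only [Matrix.cons_val_zero, Matrix.cons_val_one, Matrix.head_cons,
        Matrix.cons_val_two, Matrix.tail_cons, smul_eq_mul] at key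
      have hsum : ((1 + v)/2 : ℝ) • ((1,1) : ℝ × ℝ) + ((1 - w)/2) • ((-1,-1) : ℝ × ℝ)
          + ((w - v)/2) • ((-1,1) : ℝ × ℝ) = (v, w) := by
        apply Prod.ext <;> simp [Prod.smul_fst, Prod.smul_snd, smul_eq_mul] <;> ring
      rw [hsum] at key
      rw [abs_of_nonpos (by linarith : v - w ≤ 0)]
      have e1 : ((1 + v)/2 : ℝ) * 1 ≤ (1 + v)/2 * g' (1, 1) :=
        mul_le_mul_of_nonneg_left hg11 (by linarith)
      have e2 : ((1 - w)/2 : ℝ) * 1 ≤ (1 - w)/2 * g' (-1, -1) :=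
        mul_le_mul_of_nonneg_left hgneg (by linarith)
      have e3 : (0:ℝ) ≤ (w - v)/2 * g' (-1, 1) := mul_nonneg (by linarith) hgn1
      linarith
end

section
/- In Example 2, the target function φ* is not achievable: for every strategy of the decision maker, i.e. every function σ mapping finite sequences (lists) of elements of [−1,1]² to [0,1], there exists a sequence ((v_t, w_t))_{t≥1} in [−1,1]² such that, setting x_t := σ((v_1,w_1),…,(v_{t−1},w_{t−1})), r̄_T := (1/T)·Σ_{t=1}^T (x_t·v_t + (1−x_t)·w_t), v̄_T := (1/T)·Σ_{t=1}^T v_t and w̄_T := (1/T)·Σ_{t=1}^T w_t, the sequence T ↦ max{0, |r̄_T| − φ*(v̄_T, w̄_T)} does not converge to 0 as T → ∞. -/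
/-- The action played at round `t` by the strategy `σ` against the sequence `vw`:
`x_t = σ((v₁,w₁), …, (v_{t−1},w_{t−1}))`. -/
noncomputable def xSeqEx2 (σ : List (ℝ × ℝ) → ℝ) (vw : ℕ → ℝ × ℝ) (t : ℕ) : ℝ :=
  σ (List.ofFn fun i : Fin (t - 1) => vw (i + 1))

/-- Average payoff `r̄_T = (1/T) ∑_{t=1}^T (x_t·v_t + (1−x_t)·w_t)`. -/
noncomputable def rbarEx2 (σ : List (ℝ × ℝ) → ℝ) (vw : ℕ → ℝ × ℝ) (T : ℕ) : ℝ :=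
  (T : ℝ)⁻¹ * ∑ t ∈ Finset.Icc 1 T,
    (xSeqEx2 σ vw t * (vw t).1 + (1 - xSeqEx2 σ vw t) * (vw t).2)

namespace Stmt18aux

def cube : Set (ℝ × ℝ) := Set.Icc ((-1, -1) : ℝ × ℝ) (1, 1)

lemma mem_cube {p : ℝ × ℝ} (h1 : -1 ≤ p.1) (h2 : p.1 ≤ 1) (h3 : -1 ≤ p.2) (h4 : p.2 ≤ 1) :
    p ∈ cube := by
  constructor <;> constructor <;> simpa

lemma cube_bounds {p : ℝ × ℝ} (h : p ∈ cube) : |p.1| ≤ 1 ∧ |p.2| ≤ 1 := by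
  obtain ⟨⟨a, b⟩, ⟨c, d⟩⟩ := h
  exact ⟨abs_le.mpr ⟨a, c⟩, abs_le.mpr ⟨b, d⟩⟩

lemma phi_bdd (p : ℝ × ℝ) :
    BddBelow ((fun x => |x * p.1 + (1 - x) * p.2|) '' Set.Icc (0 : ℝ) 1) :=
  ⟨0, by rintro y ⟨x, -, rfl⟩; positivity⟩

lemma phi_le_abs_snd (p : ℝ × ℝ) : phiStarEx2 p ≤ |p.2| := by
  apply csInf_le (phi_bdd p)
  refine ⟨0, ⟨le_refl 0, zero_le_one⟩, ?_⟩
  norm_num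

lemma phi_nonpos {p : ℝ × ℝ} (h1 : 0 ≤ p.1) (h2 : p.2 ≤ 0) : phiStarEx2 p ≤ 0 := by
  apply csInf_le (phi_bdd p)
  by_cases h : p.1 - p.2 = 0
  · have hp1 : p.1 = 0 := le_antisymm (by linarith) h1
    have hp2 : p.2 = 0 := by linarith
    exact ⟨0, ⟨le_refl 0, zero_le_one⟩, by simp [hp1, hp2]⟩
  · have hd : 0 < p.1 - p.2 := lt_of_le_of_ne (by linarith) (Ne.symm h)
    refine ⟨-p.2 / (p.1 - p.2), ⟨div_nonneg (by linarith) hd.le, ?_⟩, ?_⟩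
    · rw [div_le_one hd]; linarith
    · have : -p.2 / (p.1 - p.2) * p.1 + (1 - -p.2 / (p.1 - p.2)) * p.2 = 0 := by
        field_simp
        ring
      simp [this]

lemma phi_le {p : ℝ × ℝ} {c : ℝ} (h1 : 0 ≤ p.1) (hc : 0 ≤ c) (h2 : p.2 ≤ c) :
    phiStarEx2 p ≤ c := by
  rcases le_or_gt p.2 0 with h | h
  · exact (phi_nonpos h1 h).trans hc
  · exact (phi_le_abs_snd p).trans (by rw [abs_of_nonneg h.le]; exact h2)

lemma payoff_abs_le {x v w : ℝ} (hx0 : 0 ≤ x) (hx1 : x ≤ 1) (hv : |v| ≤ 1) (hw : |w| ≤ 1) :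
    |x * v + (1 - x) * w| ≤ 1 := by
  rw [abs_le] at hv hw ⊢
  constructor <;> nlinarith [hv.1, hv.2, hw.1, hw.2]

lemma xSeq_congr {σ : List (ℝ × ℝ) → ℝ} {vw1 vw2 : ℕ → ℝ × ℝ} {t : ℕ}
    (h : ∀ s, 1 ≤ s → s ≤ t - 1 → vw1 s = vw2 s) :
    xSeqEx2 σ vw1 t = xSeqEx2 σ vw2 t := by
  unfold xSeqEx2
  congr 1
  congr 1
  funext i
  exact h (i + 1) (Nat.le_add_left 1 i) (by omega)

lemma xSeq_mem {σ : List (ℝ × ℝ) → ℝ}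
    (hσ : ∀ l : List (ℝ × ℝ), (∀ p ∈ l, p ∈ Set.Icc ((-1, -1) : ℝ × ℝ) (1, 1)) →
      σ l ∈ Set.Icc (0 : ℝ) 1)
    {vw : ℕ → ℝ × ℝ} (hvw : ∀ t, 1 ≤ t → vw t ∈ cube) (t : ℕ) :
    xSeqEx2 σ vw t ∈ Set.Icc (0 : ℝ) 1 := by
  apply hσ
  intro p hp
  rw [List.mem_ofFn] at hp
  obtain ⟨i, rfl⟩ := hp
  exact hvw _ (Nat.le_add_left 1 i)

noncomputable def payoff (σ : List (ℝ × ℝ) → ℝ) (vw : ℕ → ℝ × ℝ) (t : ℕ) : ℝ :=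
  xSeqEx2 σ vw t * (vw t).1 + (1 - xSeqEx2 σ vw t) * (vw t).2

lemma rbar_eq (σ : List (ℝ × ℝ) → ℝ) (vw : ℕ → ℝ × ℝ) (T : ℕ) :
    rbarEx2 σ vw T = (T : ℝ)⁻¹ * ∑ t ∈ Finset.Icc 1 T, payoff σ vw t := rfl

noncomputable def gapE (σ : List (ℝ × ℝ) → ℝ) (vw : ℕ → ℝ × ℝ) (T : ℕ) : ℝ :=
  max 0 (|rbarEx2 σ vw T|
    - phiStarEx2 ((T : ℝ)⁻¹ * ∑ t ∈ Finset.Icc 1 T, (vw t).1,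
        (T : ℝ)⁻¹ * ∑ t ∈ Finset.Icc 1 T, (vw t).2))

lemma payoff_congr {σ : List (ℝ × ℝ) → ℝ} {vw1 vw2 : ℕ → ℝ × ℝ} {t : ℕ}
    (h : ∀ s, 1 ≤ s → s ≤ t → vw1 s = vw2 s) (ht : 1 ≤ t) :
    payoff σ vw1 t = payoff σ vw2 t := by
  unfold payoff
  rw [xSeq_congr (fun s hs1 hs2 => h s hs1 (by omega)), h t ht le_rfl]

lemma gapE_congr {σ : List (ℝ × ℝ) → ℝ} {vw1 vw2 : ℕ → ℝ × ℝ} {T : ℕ}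
    (h : ∀ t, 1 ≤ t → t ≤ T → vw1 t = vw2 t) :
    gapE σ vw1 T = gapE σ vw2 T := by
  have h1 : ∑ t ∈ Finset.Icc 1 T, (vw1 t).1 = ∑ t ∈ Finset.Icc 1 T, (vw2 t).1 :=
    Finset.sum_congr rfl fun t ht => by
      rw [Finset.mem_Icc] at ht; rw [h t ht.1 ht.2]
  have h2 : ∑ t ∈ Finset.Icc 1 T, (vw1 t).2 = ∑ t ∈ Finset.Icc 1 T, (vw2 t).2 :=
    Finset.sum_congr rfl fun t ht => by
      rw [Finset.mem_Icc] at ht; rw [h t ht.1 ht.2]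
  have h3 : rbarEx2 σ vw1 T = rbarEx2 σ vw2 T := by
    rw [rbar_eq, rbar_eq]
    congr 1
    exact Finset.sum_congr rfl fun t ht => by
      rw [Finset.mem_Icc] at ht
      exact payoff_congr (fun s hs1 hs2 => h s hs1 (hs2.trans ht.2)) ht.1
  unfold gapE
  rw [h1, h2, h3]

lemma sum_split (f : ℕ → ℝ) {a b : ℕ} (h : a ≤ b) :
    ∑ t ∈ Finset.Icc 1 b, f t
      = ∑ t ∈ Finset.Icc 1 a, f t + ∑ t ∈ Finset.Ioc a b, f t := by
  rw [show Finset.Icc 1 b = Finset.Ioc 0 b from by rw [← Finset.Icc_add_one_left_eq_Ioc]; rfl,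
      show Finset.Icc 1 a = Finset.Ioc 0 a from by rw [← Finset.Icc_add_one_left_eq_Ioc]; rfl]
  exact (Finset.sum_Ioc_consecutive f (Nat.zero_le a) h).symm

lemma sum_abs_le {f : ℕ → ℝ} {s : Finset ℕ} (h : ∀ t ∈ s, |f t| ≤ 1) :
    |∑ t ∈ s, f t| ≤ s.card :=
  (Finset.abs_sum_le_sum_abs f s).trans ((Finset.sum_le_card_nsmul s _ 1 h).trans (by simp))

lemma inv_mul_ge' {T c s : ℝ} (hT : 0 < T) (h : c * T ≤ s) : c ≤ T⁻¹ * s := by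
  rw [inv_mul_eq_div, le_div_iff₀ hT]; linarith

lemma inv_mul_le' {T c s : ℝ} (hT : 0 < T) (h : s ≤ c * T) : T⁻¹ * s ≤ c := by
  rw [inv_mul_eq_div, div_le_iff₀ hT]; linarith


lemma step (σ : List (ℝ × ℝ) → ℝ)
    (hσ : ∀ l : List (ℝ × ℝ), (∀ p ∈ l, p ∈ Set.Icc ((-1, -1) : ℝ × ℝ) (1, 1)) →
      σ l ∈ Set.Icc (0 : ℝ) 1)
    (n : ℕ) (p : ℕ → ℝ × ℝ) (hp : ∀ t, 1 ≤ t → t ≤ n → p t ∈ cube) :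
    ∃ Tq : ℕ × (ℕ → ℝ × ℝ), n < Tq.1 ∧ (∀ t, t ≤ n → Tq.2 t = p t) ∧
      (∀ t, 1 ≤ t → Tq.2 t ∈ cube) ∧ 1 / 8 ≤ gapE σ Tq.2 Tq.1 := by
  classical
  set q1 : ℕ → ℝ × ℝ := fun t => if t ≤ n then p t else ((1 : ℝ), (-1 : ℝ)) with hq1def
  have hq1c : ∀ t, 1 ≤ t → q1 t ∈ cube := by
    intro t ht
    by_cases h : t ≤ n
    · simpa [hq1def, h] using hp t ht h
    · simp only [hq1def, h, if_false]
      exact mem_cube (by norm_num) (by norm_num) (by norm_num) (by norm_num)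
  have hx1 : ∀ t, xSeqEx2 σ q1 t ∈ Set.Icc (0 : ℝ) 1 := xSeq_mem hσ hq1c
  have hpay1 : ∀ t, 1 ≤ t → |payoff σ q1 t| ≤ 1 := by
    intro t ht
    obtain ⟨hv, hw⟩ := cube_bounds (hq1c t ht)
    exact payoff_abs_le (hx1 t).1 (hx1 t).2 hv hw
  -- shared bounds on the component sums of q1
  have hW : ∀ T, n ≤ T → ∑ t ∈ Finset.Icc 1 T, (q1 t).2 ≤ 2 * n - T := by
    intro T hnT
    rw [sum_split _ hnT]
    have h1 : ∑ t ∈ Finset.Icc 1 n, (q1 t).2 ≤ (n : ℝ) := by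
      have := sum_abs_le (f := fun t => (q1 t).2) (s := Finset.Icc 1 n)
        (fun t ht => (cube_bounds (hq1c t (Finset.mem_Icc.mp ht).1)).2)
      rw [Nat.card_Icc] at this
      have h2 := (le_abs_self _).trans this
      simpa using h2
    have h2 : ∑ t ∈ Finset.Ioc n T, (q1 t).2 = -((T : ℝ) - n) := by
      have he : ∀ t ∈ Finset.Ioc n T, (q1 t).2 = -1 := fun t ht => by
        rw [Finset.mem_Ioc] at ht
        simp [hq1def, Nat.not_le.mpr ht.1]
      rw [Finset.sum_congr rfl he, Finset.sum_const, Nat.card_Ioc, nsmul_eq_mul,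
        Nat.cast_sub hnT]
      ring
    linarith
  have hV : ∀ T, n ≤ T → (T : ℝ) - 2 * n ≤ ∑ t ∈ Finset.Icc 1 T, (q1 t).1 := by
    intro T hnT
    rw [sum_split _ hnT]
    have h1 : -(n : ℝ) ≤ ∑ t ∈ Finset.Icc 1 n, (q1 t).1 := by
      have := sum_abs_le (f := fun t => (q1 t).1) (s := Finset.Icc 1 n)
        (fun t ht => (cube_bounds (hq1c t (Finset.mem_Icc.mp ht).1)).1)
      rw [Nat.card_Icc] at this
      have h3 := neg_le_of_abs_le this
      simpa using h3
    have h2 : ∑ t ∈ Finset.Ioc n T, (q1 t).1 = (T : ℝ) - n := by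
      have he : ∀ t ∈ Finset.Ioc n T, (q1 t).1 = 1 := fun t ht => by
        rw [Finset.mem_Ioc] at ht
        simp [hq1def, Nat.not_le.mpr ht.1]
      rw [Finset.sum_congr rfl he, Finset.sum_const, Nat.card_Ioc, nsmul_eq_mul,
        Nat.cast_sub hnT]
      ring
    linarith
  set S : ℕ → ℝ := fun T => ∑ t ∈ Finset.Icc 1 T, payoff σ q1 t with hSdef
  by_cases hA : ∃ T, 8 * (n + 1) ≤ T ∧ (T : ℝ) / 8 ≤ |S T|
  · -- Case A : play (1,-1) forever, big gap at T
    obtain ⟨T, hT8, hST⟩ := hA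
    have hnT : n ≤ T := by omega
    have hTpos : (0 : ℝ) < T := by
      have : (0 : ℕ) < T := by omega
      exact_mod_cast this
    have hTcast : (8 : ℝ) * (n + 1) ≤ T := by exact_mod_cast hT8
    refine ⟨(T, q1), by omega, fun t ht => by simp [hq1def, ht], hq1c, ?_⟩
    have habs : 1 / 8 ≤ |rbarEx2 σ q1 T| := by
      rw [rbar_eq, abs_mul, abs_of_nonneg (inv_nonneg.mpr hTpos.le)]
      exact inv_mul_ge' hTpos (by linarith)
    have hwbar : (T : ℝ)⁻¹ * ∑ t ∈ Finset.Icc 1 T, (q1 t).2 ≤ 0 :=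
      mul_nonpos_of_nonneg_of_nonpos (inv_nonneg.mpr hTpos.le)
        (le_trans (hW T hnT) (by linarith))
    have hvbar : 0 ≤ (T : ℝ)⁻¹ * ∑ t ∈ Finset.Icc 1 T, (q1 t).1 :=
      mul_nonneg (inv_nonneg.mpr hTpos.le) (le_trans (by linarith) (hV T hnT))
    have hphi : phiStarEx2 ((T : ℝ)⁻¹ * ∑ t ∈ Finset.Icc 1 T, (q1 t).1,
        (T : ℝ)⁻¹ * ∑ t ∈ Finset.Icc 1 T, (q1 t).2) ≤ 0 := phi_nonpos hvbar hwbar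
    unfold gapE
    refine le_trans ?_ (le_max_right _ _)
    linarith
  · -- Case B : the payoff average stays small, switch to (1,1)
    push_neg at hA
    set T1 : ℕ := 8 * (n + 1) with hT1def
    set T2 : ℕ := 2 * T1 with hT2def
    set q : ℕ → ℝ × ℝ := fun t => if t ≤ T1 then q1 t else ((1 : ℝ), (1 : ℝ)) with hqdef
    have hqq1 : ∀ t, t ≤ T1 → q t = q1 t := fun t ht => by simp [hqdef, ht]
    have hqc : ∀ t, 1 ≤ t → q t ∈ cube := by
      intro t ht
      by_cases h : t ≤ T1
      · rw [hqq1 t h]; exact hq1c t ht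
      · simp only [hqdef, h, if_false]
        exact mem_cube (by norm_num) (by norm_num) (by norm_num) (by norm_num)
    have hpayq : ∀ t, 1 ≤ t → t ≤ T1 → payoff σ q t = payoff σ q1 t := by
      intro t h1 h2
      exact payoff_congr (fun s hs1 hs2 => hqq1 s (hs2.trans h2)) h1
    have hpay_tail : ∀ t, T1 < t → payoff σ q t = 1 := by
      intro t ht
      have hq2 : q t = ((1 : ℝ), (1 : ℝ)) := by simp [hqdef, Nat.not_le.mpr ht]
      unfold payoff
      rw [hq2]
      show xSeqEx2 σ q t * 1 + (1 - xSeqEx2 σ q t) * 1 = 1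
      ring
    have hT1T2 : T1 ≤ T2 := by omega
    have hT1pos : (0 : ℝ) < T1 := by
      have : (0 : ℕ) < T1 := by omega
      exact_mod_cast this
    have hT2cast : (T2 : ℝ) = 2 * T1 := by push_cast [hT2def]; ring
    have hT2pos : (0 : ℝ) < T2 := by rw [hT2cast]; linarith
    have hST1 : |S T1| < (T1 : ℝ) / 8 := hA T1 le_rfl
    have hST1' := abs_lt.mp hST1
    -- payoff sum at T2
    have hSq : ∑ t ∈ Finset.Icc 1 T2, payoff σ q t = S T1 + T1 := by
      rw [sum_split _ hT1T2]
      congr 1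
      · exact Finset.sum_congr rfl fun t ht => by
          rw [Finset.mem_Icc] at ht; exact hpayq t ht.1 ht.2
      · rw [Finset.sum_congr rfl (fun t ht => hpay_tail t (Finset.mem_Ioc.mp ht).1)]
        rw [Finset.sum_const, Nat.card_Ioc]
        have : T2 - T1 = T1 := by omega
        rw [this]
        simp
    have hWq : ∑ t ∈ Finset.Icc 1 T2, (q t).2 ≤ 2 * (n : ℝ) := by
      rw [sum_split _ hT1T2]
      have he : ∑ t ∈ Finset.Icc 1 T1, (q t).2 = ∑ t ∈ Finset.Icc 1 T1, (q1 t).2 :=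
        Finset.sum_congr rfl fun t ht => by rw [hqq1 t (Finset.mem_Icc.mp ht).2]
      have h1 : ∑ t ∈ Finset.Icc 1 T1, (q t).2 ≤ 2 * (n : ℝ) - T1 := by
        rw [he]; exact hW T1 (by omega)
      have h2 : ∑ t ∈ Finset.Ioc T1 T2, (q t).2 = (T1 : ℝ) := by
        rw [Finset.sum_congr rfl (fun t ht => show (q t).2 = 1 by
          rw [Finset.mem_Ioc] at ht
          simp [hqdef, Nat.not_le.mpr ht.1])]
        rw [Finset.sum_const, Nat.card_Ioc]
        have : T2 - T1 = T1 := by omega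
        rw [this]
        simp
      linarith
    have hVq : (0 : ℝ) ≤ ∑ t ∈ Finset.Icc 1 T2, (q t).1 := by
      rw [sum_split _ hT1T2]
      have he : ∑ t ∈ Finset.Icc 1 T1, (q t).1 = ∑ t ∈ Finset.Icc 1 T1, (q1 t).1 :=
        Finset.sum_congr rfl fun t ht => by rw [hqq1 t (Finset.mem_Icc.mp ht).2]
      have h1 : (T1 : ℝ) - 2 * n ≤ ∑ t ∈ Finset.Icc 1 T1, (q t).1 := by
        rw [he]; exact hV T1 (by omega)
      have h2 : ∑ t ∈ Finset.Ioc T1 T2, (q t).1 = (T1 : ℝ) := by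
        rw [Finset.sum_congr rfl (fun t ht => show (q t).1 = 1 by
          rw [Finset.mem_Ioc] at ht
          simp [hqdef, Nat.not_le.mpr ht.1])]
        rw [Finset.sum_const, Nat.card_Ioc]
        have : T2 - T1 = T1 := by omega
        rw [this]
        simp
      have hT1cast : (8 : ℝ) * (n + 1) = T1 := by push_cast [hT1def]; ring
      linarith
    refine ⟨(T2, q), by omega, fun t ht => by
      show q t = p t
      rw [hqq1 t (by omega)]; simp [hq1def, ht], hqc, ?_⟩
    have habs : 7 / 16 ≤ |rbarEx2 σ q T2| := by
      rw [rbar_eq, hSq, abs_mul, abs_of_nonneg (inv_nonneg.mpr hT2pos.le),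
        abs_of_nonneg (by linarith : (0 : ℝ) ≤ S T1 + T1)]
      exact inv_mul_ge' hT2pos (by rw [hT2cast]; linarith)
    have hwbar : (T2 : ℝ)⁻¹ * ∑ t ∈ Finset.Icc 1 T2, (q t).2 ≤ 1 / 8 := by
      apply inv_mul_le' hT2pos
      rw [hT2cast]
      have hT1cast : (8 : ℝ) * (n + 1) = T1 := by push_cast [hT1def]; ring
      linarith
    have hvbar : 0 ≤ (T2 : ℝ)⁻¹ * ∑ t ∈ Finset.Icc 1 T2, (q t).1 :=
      mul_nonneg (inv_nonneg.mpr hT2pos.le) hVq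
    have hphi : phiStarEx2 ((T2 : ℝ)⁻¹ * ∑ t ∈ Finset.Icc 1 T2, (q t).1,
        (T2 : ℝ)⁻¹ * ∑ t ∈ Finset.Icc 1 T2, (q t).2) ≤ 1 / 8 :=
      phi_le hvbar (by norm_num) hwbar
    unfold gapE
    refine le_trans ?_ (le_max_right _ _)
    linarith


/-- The state space for the inductive construction. -/
def Sub : Type := {s : ℕ × (ℕ → ℝ × ℝ) // ∀ t, 1 ≤ t → s.2 t ∈ cube}

noncomputable def nextS (σ : List (ℝ × ℝ) → ℝ)
    (hσ : ∀ l : List (ℝ × ℝ), (∀ p ∈ l, p ∈ Set.Icc ((-1, -1) : ℝ × ℝ) (1, 1)) →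
      σ l ∈ Set.Icc (0 : ℝ) 1) (s : Sub) : Sub :=
  ⟨(step σ hσ s.1.1 s.1.2 (fun t ht _ => s.2 t ht)).choose,
   (step σ hσ s.1.1 s.1.2 (fun t ht _ => s.2 t ht)).choose_spec.2.2.1⟩

lemma nextS_spec (σ : List (ℝ × ℝ) → ℝ)
    (hσ : ∀ l : List (ℝ × ℝ), (∀ p ∈ l, p ∈ Set.Icc ((-1, -1) : ℝ × ℝ) (1, 1)) →
      σ l ∈ Set.Icc (0 : ℝ) 1) (s : Sub) :
    s.1.1 < (nextS σ hσ s).1.1 ∧ (∀ t, t ≤ s.1.1 → (nextS σ hσ s).1.2 t = s.1.2 t) ∧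
      1 / 8 ≤ gapE σ (nextS σ hσ s).1.2 (nextS σ hσ s).1.1 := by
  have h := (step σ hσ s.1.1 s.1.2 (fun t ht _ => s.2 t ht)).choose_spec
  exact ⟨h.1, h.2.1, h.2.2.2⟩

noncomputable def s0 : Sub :=
  ⟨(0, fun _ => ((1 : ℝ), (-1 : ℝ))), fun _ _ =>
    mem_cube (by norm_num) (by norm_num) (by norm_num) (by norm_num)⟩

end Stmt18aux

open Stmt18aux

/-- in Example 2, the target function `φ*` is not achievable: for every strategy
`σ` (mapping histories in `[−1,1]²` to mixed actions in `[0,1]`), there is a sequence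
`((v_t, w_t))` in `[−1,1]²` against which `max{0, |r̄_T| − φ*(v̄_T, w̄_T)}` does not tend
to `0`. -/
theorem stmt18 (σ : List (ℝ × ℝ) → ℝ)
    (hσ : ∀ l : List (ℝ × ℝ), (∀ p ∈ l, p ∈ Set.Icc ((-1, -1) : ℝ × ℝ) (1, 1)) →
      σ l ∈ Set.Icc (0 : ℝ) 1) :
    ∃ vw : ℕ → ℝ × ℝ, (∀ t : ℕ, 1 ≤ t → vw t ∈ Set.Icc ((-1, -1) : ℝ × ℝ) (1, 1)) ∧
      ¬ Filter.Tendsto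
          (fun T : ℕ =>
            max 0 (|rbarEx2 σ vw T|
              - phiStarEx2 ((T : ℝ)⁻¹ * ∑ t ∈ Finset.Icc 1 T, (vw t).1,
                  (T : ℝ)⁻¹ * ∑ t ∈ Finset.Icc 1 T, (vw t).2)))
          Filter.atTop (nhds 0) := by
  classical
  set g : ℕ → Sub := fun k => (nextS σ hσ)^[k] s0 with hgdef
  have hgsucc : ∀ k, g (k + 1) = nextS σ hσ (g k) := fun k =>
    Function.iterate_succ_apply' (nextS σ hσ) k s0
  set nseq : ℕ → ℕ := fun k => (g k).1.1 with hnseqdef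
  set pf : ℕ → ℕ → ℝ × ℝ := fun k => (g k).1.2 with hpfdef
  have hspec : ∀ k, nseq k < nseq (k + 1) ∧
      (∀ t, t ≤ nseq k → pf (k + 1) t = pf k t) ∧
      1 / 8 ≤ gapE σ (pf (k + 1)) (nseq (k + 1)) := by
    intro k
    have h := nextS_spec σ hσ (g k)
    simp only [hnseqdef, hpfdef, hgsucc k]
    exact h
  have hmono : StrictMono nseq := strictMono_nat_of_lt_succ fun k => (hspec k).1
  have hle : ∀ k, k ≤ nseq k := fun k => hmono.le_apply
  have hagree : ∀ k k', k ≤ k' → ∀ t, t ≤ nseq k → pf k' t = pf k t := by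
    intro k k' hkk'
    induction k', hkk' using Nat.le_induction with
    | base => intro t _; rfl
    | succ k' hkk' ih =>
      intro t ht
      rw [(hspec k').2.1 t (ht.trans (hmono.monotone hkk')), ih t ht]
  refine ⟨fun t => pf t t, fun t ht => (g t).2 t ht, ?_⟩
  have hvw_eq : ∀ k t, 1 ≤ t → t ≤ nseq k → pf t t = pf k t := by
    intro k t _ htk
    rcases le_total t k with h | h
    · exact (hagree t k h t (hle t)).symm
    · exact hagree k t h t htk
  intro hT
  have hev := hT.eventually (gt_mem_nhds (show (0 : ℝ) < 1 / 8 by norm_num))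
  rw [Filter.eventually_atTop] at hev
  obtain ⟨N, hN⟩ := hev
  have hgap := (hspec N).2.2
  have heq : gapE σ (fun t => pf t t) (nseq (N + 1)) = gapE σ (pf (N + 1)) (nseq (N + 1)) :=
    gapE_congr fun t ht1 ht2 => hvw_eq (N + 1) t ht1 ht2
  have hlt : gapE σ (fun t => pf t t) (nseq (N + 1)) < 1 / 8 :=
    hN (nseq (N + 1)) ((Nat.le_succ N).trans (hle (N + 1)))
  rw [heq] at hlt
  linarith
end
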